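/- arXiv:1911.11957 — 3 statements merged into one kernel-verified Lean document; each statement's English description precedes it below -/
import Mathlib

section
/- Let d, C > 0 be constants and let J satisfy condition (J1). For any given constants H > r₀ > 0 and any continuous function w₀ : [-r₀, r₀] → ℝ with w₀(±r₀) = 0 and w₀ > 0 on (-r₀, r₀), there exists ρ⁰ > 0 (depending on J, d, C, w₀ and r₀) with the following property: whenever ρ ≥ ρ⁰ and (w, l, r) is a triple with l, r ∈ C¹([0,∞)), r(0) = -l(0) = r₀, w continuous on {(t,x) : t ≥ 0, l(t) ≤ x ≤ r(t)} and continuously differentiable in t, satisfying w_t(t,x) ≥ d ∫_{l(t)}^{r(t)} J(x-y) w(t,y) dy - d w(t,x) - C w(t,x) for t > 0 and l(t) < x < r(t); w(t, l(t)) = w(t, r(t)) = 0 for t > 0; r'(t) ≥ ρ ∫_{l(t)}^{r(t)} ∫_{r(t)}^{∞} J(x-y) w(t,x) dy dx and l'(t) ≤ -ρ ∫_{l(t)}^{r(t)} ∫_{-∞}^{l(t)} J(x-y) w(t,x) dy dx for t > 0; and w(0,·) = w₀ on [-r₀, r₀]; then liminf_{t→∞} r(t) ≥ H and limsup_{t→∞}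 l(t) ≤ -H. -/
open MeasureTheory Filter Set Topology Real

/-!
A minimum-point argument gives `w ≥ 0`: at a negative minimum the reaction term `-C w` makes the
time derivative positive. Hence both fronts move outward. Fix a window of width `s` just inside
the right front, small enough that `J ≥ δ` across it. While `w ≥ ε` on the window, the flux
through `r` is at least `δ s² ε`, so a large `ρ` pushes `r` forward by `s` within time `τ / 2`.
The nonlocal term then feeds the next window, and the linear inequality
`w_t ≥ d δ s ε - (d + C) w` gives `w ≥ γ ε` there after another `τ / 2`. Repeating this
`⌈(H - r₀) / s⌉` times within the unit time interval carries `r` past `H`; the left front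
follows by the reflection `x ↦ -x`.
-/

/-- Condition (J1) on the kernel `J`. -/
structure KernelCond (J : ℝ → ℝ) : Prop where
  lipschitz : ∃ K, LipschitzWith K J
  pos_at_zero : 0 < J 0
  nonneg : ∀ x, 0 ≤ J x
  integrable : Integrable J
  integral_one : ∫ x, J x = 1
  symm : ∀ x, J (-x) = J x
  bounded : ∃ M, ∀ x, J x ≤ M

theorem linear_ode_lower_bound {g : ℝ → ℝ} {A B t₀ T : ℝ} (hB : B ≠ 0)
    (hg : ContinuousOn g (Icc t₀ T))
    (hder : ∀ t ∈ Ioo t₀ T, DifferentiableAt ℝ g t ∧ A - B * g t ≤ deriv g t) :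
    ∀ t ∈ Icc t₀ T, A / B + (g t₀ - A / B) * exp (-(B * (t - t₀))) ≤ g t := by
  have hexp (t : ℝ) : HasDerivAt (fun t => exp (B * t)) (exp (B * t) * B) t := by
    simpa [mul_comm] using ((hasDerivAt_id t).const_mul B).exp
  have hφ (t : ℝ) (ht : t ∈ Ioo t₀ T) : HasDerivAt (fun t => (g t - A / B) * exp (B * t))
      ((deriv g t + B * g t - A) * exp (B * t)) t := by
    refine (((hder t ht).1.hasDerivAt.sub_const (A / B)).mul (hexp t)).congr_deriv ?_
    field_simp
    ring
  have hmono : MonotoneOn (fun t => (g t - A / B) * exp (B * t)) (Icc t₀ T) := by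
    refine monotoneOn_of_deriv_nonneg (convex_Icc _ _)
      ((hg.sub continuousOn_const).mul (by fun_prop)) ?_ ?_ <;> rw [interior_Icc]
    · exact fun t ht => (hφ t ht).differentiableAt.differentiableWithinAt
    · intro t ht
      rw [(hφ t ht).deriv]
      exact mul_nonneg (by linarith [(hder t ht).2]) (exp_pos _).le
  intro t ht
  suffices (g t₀ - A / B) * exp (-(B * (t - t₀))) ≤ g t - A / B by linarith
  have hsplit : exp (-(B * (t - t₀))) = exp (B * t₀) / exp (B * t) := by
    rw [← exp_sub]
    ring_nf
  rw [hsplit, ← mul_div_assoc, div_le_iff₀ (exp_pos _)]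
  exact hmono (left_mem_Icc.2 (ht.1.trans ht.2)) ht ht.1

theorem deriv_nonpos_of_isLocalMinOn_Iic {g : ℝ → ℝ} {t : ℝ} (hg : DifferentiableAt ℝ g t)
    (hmin : IsLocalMinOn g (Iic t) t) : deriv g t ≤ 0 := by
  have hseg : segment ℝ t (t + -1) ⊆ Iic t := by
    rw [segment_eq_Icc']
    exact fun x hx => hx.2.trans (max_le le_rfl (by linarith))
  simpa using hmin.hasFDerivWithinAt_nonneg hg.hasDerivAt.hasFDerivAt.hasFDerivWithinAt
    (mem_posTangentConeAt_of_segment_subset hseg)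

theorem continuous_integral_Iio {f : ℝ → ℝ} (hf : Integrable f) :
    Continuous fun u => ∫ z in Iio u, f z := by
  have h (u : ℝ) : ∫ z in Iio u, f z = (∫ z in Iic 0, f z) + ∫ z in 0..u, f z := by
    rw [← integral_Iic_eq_integral_Iio,
      ← intervalIntegral.integral_Iic_sub_Iic hf.integrableOn hf.integrableOn]
    ring
  simp_rw [h]
  exact continuous_const.add
    (intervalIntegral.continuous_primitive (fun _ _ => hf.intervalIntegrable) 0)

theorem integral_Ioi_comp_sub_left (f : ℝ → ℝ) (x R : ℝ) :
    ∫ y in Ioi R, f (x - y) = ∫ z in Iio (x - R), f z := by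
  have h : (fun y => x - y) ⁻¹' Iio (x - R) = Ioi R := by
    ext y
    simp
  rw [← h, (Measure.measurePreserving_sub_left volume x).setIntegral_preimage_emb
    (MeasurableEquiv.subLeft x).measurableEmbedding]

theorem mul_sub_le_intervalIntegral_of_le_on {g : ℝ → ℝ} {a b p q κ : ℝ}
    (hap : a ≤ p) (hpq : p ≤ q) (hqb : q ≤ b) (hg : ContinuousOn g (Icc a b))
    (hg0 : ∀ x ∈ Icc a b, 0 ≤ g x) (hκ : ∀ x ∈ Icc p q, κ ≤ g x) :
    κ * (q - p) ≤ ∫ x in a..b, g x := by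
  have hpq' : ContinuousOn g (Icc p q) := hg.mono (Icc_subset_Icc hap hqb)
  calc κ * (q - p) = ∫ _ in p..q, κ := by simp [mul_comm]
    _ ≤ ∫ x in p..q, g x := intervalIntegral.integral_mono_on hpq intervalIntegrable_const
        (hpq'.intervalIntegrable_of_Icc hpq) hκ
    _ ≤ ∫ x in a..b, g x := intervalIntegral.integral_mono_interval hap hpq hqb
        ((ae_restrict_iff' measurableSet_Ioc).2
          (ae_of_all _ fun x hx => hg0 x (Ioc_subset_Icc_self hx)))
        (hg.intervalIntegrable_of_Icc (hap.trans (hpq.trans hqb)))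

theorem isCompact_setOf_mem_Icc {s : Set ℝ} (hs : IsCompact s) {f g : ℝ → ℝ}
    (hf : ContinuousOn f s) (hg : ContinuousOn g s) :
    IsCompact {p : ℝ × ℝ | p.1 ∈ s ∧ p.2 ∈ Icc (f p.1) (g p.1)} := by
  obtain ⟨m, hm⟩ := hs.bddBelow_image hf
  obtain ⟨M, hM⟩ := hs.bddAbove_image hg
  have hS : IsClosed (s ×ˢ (univ : Set ℝ)) := hs.isClosed.prod isClosed_univ
  have hf' : ContinuousOn (fun p : ℝ × ℝ => f p.1) (s ×ˢ univ) :=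
    hf.comp continuousOn_fst fun p hp => hp.1
  have hg' : ContinuousOn (fun p : ℝ × ℝ => g p.1) (s ×ˢ univ) :=
    hg.comp continuousOn_fst fun p hp => hp.1
  have hclosed :=
    (hS.isClosed_le hf' continuousOn_snd).inter (hS.isClosed_le continuousOn_snd hg')
  refine (hs.prod (isCompact_Icc (a := m) (b := M))).of_isClosed_subset ?_ ?_
  · convert hclosed using 1
    ext p
    simp only [mem_ofPred_eq, mem_inter_iff, mem_prod, mem_univ, mem_Icc]
    tauto
  · rintro p ⟨hp, h1, h2⟩
    exact ⟨hp, (hm ⟨p.1, hp, rfl⟩).trans h1, h2.trans (hM ⟨p.1, hp, rfl⟩)⟩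

section Evenness

variable {J : ℝ → ℝ}

theorem integral_Ioi_neg_comp_neg_sub (hJ : ∀ x, J (-x) = J x) (x c : ℝ) :
    ∫ y in Ioi (-c), J (-x - y) = ∫ y in Iio c, J (x - y) := by
  have h := integral_comp_neg_Ioi (-c) fun y => J (x - y)
  simp only [neg_neg, sub_neg_eq_add, integral_Iic_eq_integral_Iio] at h
  rw [← h]
  congr 1 with y
  rw [← hJ, neg_sub_left, neg_neg, add_comm]

theorem integral_Iio_neg_comp_neg_sub (hJ : ∀ x, J (-x) = J x) (x c : ℝ) :
    ∫ y in Iio (-c), J (-x - y) = ∫ y in Ioi c, J (x - y) := by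
  have h := integral_comp_neg_Iic (-c) fun y => J (x - y)
  simp only [neg_neg, sub_neg_eq_add, integral_Iic_eq_integral_Iio] at h
  rw [← h]
  congr 1 with y
  rw [← hJ, neg_sub_left, neg_neg, add_comm]

end Evenness

namespace KernelCond

variable {J : ℝ → ℝ}

theorem continuous (hJ : KernelCond J) : Continuous J :=
  let ⟨_, hK⟩ := hJ.lipschitz
  hK.continuous

theorem exists_pos_le_of_abs_le (hJ : KernelCond J) :
    ∃ δ > 0, ∃ σ > 0, ∀ z, |z| ≤ σ → δ ≤ J z := by
  obtain ⟨σ, hσ, hball⟩ := Metric.eventually_nhds_iff.1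
    (hJ.continuous.continuousAt.eventually (lt_mem_nhds (half_lt_self hJ.pos_at_zero)))
  refine ⟨J 0 / 2, half_pos hJ.pos_at_zero, σ / 2, half_pos hσ, fun z hz => (hball ?_).le⟩
  rw [Real.dist_eq, sub_zero]
  linarith

theorem intervalIntegral_comp_sub_le_one (hJ : KernelCond J) (x : ℝ) {a b : ℝ} (hab : a ≤ b) :
    ∫ y in a..b, J (x - y) ≤ 1 := by
  rw [intervalIntegral.integral_of_le hab, ← hJ.integral_one,
    ← integral_sub_left_eq_self J volume x]
  exact setIntegral_le_integral (hJ.integrable.comp_sub_left x)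
    (ae_of_all _ fun y => hJ.nonneg _)

theorem le_intervalIntegral_mul (hJ : KernelCond J) (x : ℝ) {g : ℝ → ℝ} {a b m : ℝ}
    (hab : a ≤ b) (hm : m ≤ 0) (hg : ContinuousOn g (Icc a b))
    (hgm : ∀ y ∈ Icc a b, m ≤ g y) :
    m ≤ ∫ y in a..b, J (x - y) * g y := by
  have hJx : Continuous fun y => J (x - y) := hJ.continuous.comp (continuous_sub_left x)
  calc m ≤ (∫ y in a..b, J (x - y)) * m := by
        nlinarith [hJ.intervalIntegral_comp_sub_le_one x hab]
    _ = ∫ y in a..b, J (x - y) * m := (intervalIntegral.integral_mul_const m _).symm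
    _ ≤ ∫ y in a..b, J (x - y) * g y :=
        intervalIntegral.integral_mono_on hab ((hJx.mul continuous_const).intervalIntegrable _ _)
          ((hJx.continuousOn.mul hg).intervalIntegrable_of_Icc hab)
          fun y hy => mul_le_mul_of_nonneg_left (hgm y hy) (hJ.nonneg _)

theorem mul_le_integral_Iio (hJ : KernelCond J) {δ s u : ℝ} (hs : 0 ≤ s)
    (hδ : ∀ z ∈ Ioo (u - s) u, δ ≤ J z) : δ * s ≤ ∫ z in Iio u, J z := by
  calc δ * s = δ * volume.real (Ioo (u - s) u) := by simp [hs]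
    _ ≤ ∫ z in Ioo (u - s) u, J z :=
        setIntegral_ge_of_const_le_real measurableSet_Ioo (by simp) hδ
          hJ.integrable.integrableOn
    _ ≤ ∫ z in Iio u, J z :=
        setIntegral_mono_set hJ.integrable.integrableOn (ae_of_all _ fun z => hJ.nonneg z)
          Ioo_subset_Iio_self.eventuallyLE

end KernelCond

noncomputable def rightFlux (J : ℝ → ℝ) (w : ℝ → ℝ → ℝ) (l r : ℝ → ℝ) (t : ℝ) : ℝ :=
  ∫ x in l t..r t, ∫ y in Ioi (r t), J (x - y) * w t x

noncomputable def leftFlux (J : ℝ → ℝ) (w : ℝ → ℝ → ℝ) (l r : ℝ → ℝ) (t : ℝ) : ℝ :=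
  ∫ x in l t..r t, ∫ y in Iio (l t), J (x - y) * w t x

structure IsSupersolution (J : ℝ → ℝ) (d C : ℝ) (w : ℝ → ℝ → ℝ) (l r : ℝ → ℝ) : Prop where
  continuousOn : ContinuousOn (fun p : ℝ × ℝ => w p.1 p.2)
    {p : ℝ × ℝ | 0 ≤ p.1 ∧ p.2 ∈ Icc (l p.1) (r p.1)}
  deriv_ge : ∀ t > 0, ∀ x ∈ Ioo (l t) (r t),
    DifferentiableAt ℝ (fun s => w s x) t ∧
    d * ((∫ y in l t..r t, J (x - y) * w t y) - w t x) - C * w t x ≤ deriv (fun s => w s x) t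
  boundary : ∀ t > 0, w t (l t) = 0 ∧ w t (r t) = 0

section Fronts

variable {J : ℝ → ℝ} {ρ : ℝ} {w : ℝ → ℝ → ℝ} {l r : ℝ → ℝ}

theorem rightFlux_reflect (hJ : ∀ x, J (-x) = J x) (t : ℝ) :
    rightFlux J (fun t x => w t (-x)) (fun t => -r t) (fun t => -l t) t =
      leftFlux J w l r t := by
  simp only [rightFlux, leftFlux, integral_mul_const]
  rw [← intervalIntegral.integral_comp_neg]
  simp only [neg_neg, integral_Ioi_neg_comp_neg_sub hJ]

theorem leftFlux_reflect (hJ : ∀ x, J (-x) = J x) (t : ℝ) :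
    leftFlux J (fun t x => w t (-x)) (fun t => -r t) (fun t => -l t) t =
      rightFlux J w l r t := by
  simp only [rightFlux, leftFlux, integral_mul_const]
  rw [← intervalIntegral.integral_comp_neg]
  simp only [neg_neg, integral_Iio_neg_comp_neg_sub hJ]

theorem rightFlux_nonneg (hJ : ∀ z, 0 ≤ J z) {t : ℝ} (hlr : l t ≤ r t)
    (hw : ∀ x ∈ Icc (l t) (r t), 0 ≤ w t x) : 0 ≤ rightFlux J w l r t :=
  intervalIntegral.integral_nonneg hlr fun x hx =>
    setIntegral_nonneg measurableSet_Ioi fun _ _ => mul_nonneg (hJ _) (hw x hx)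

theorem leftFlux_nonneg (hJ : ∀ z, 0 ≤ J z) {t : ℝ} (hlr : l t ≤ r t)
    (hw : ∀ x ∈ Icc (l t) (r t), 0 ≤ w t x) : 0 ≤ leftFlux J w l r t :=
  intervalIntegral.integral_nonneg hlr fun x hx =>
    setIntegral_nonneg measurableSet_Iio fun _ _ => mul_nonneg (hJ _) (hw x hx)

theorem monotoneOn_of_rightFlux_le_deriv (hJ : ∀ z, 0 ≤ J z) (hρ : 0 ≤ ρ)
    (hr : ContDiffOn ℝ 1 r (Ici 0)) (hfront : ∀ t > 0, ρ * rightFlux J w l r t ≤ deriv r t)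
    (hw : ∀ t ≥ 0, ∀ x ∈ Icc (l t) (r t), 0 ≤ w t x) {t₁ : ℝ}
    (hlr : ∀ t ∈ Ioo 0 t₁, l t ≤ r t) : MonotoneOn r (Icc 0 t₁) := by
  refine monotoneOn_of_deriv_nonneg (convex_Icc 0 t₁) (hr.continuousOn.mono Icc_subset_Ici_self)
    ?_ ?_ <;> rw [interior_Icc]
  · exact (hr.differentiableOn one_ne_zero).mono (Ioo_subset_Ioi_self.trans Ioi_subset_Ici_self)
  · intro t ht
    exact (mul_nonneg hρ (rightFlux_nonneg hJ (hlr t ht) (hw t ht.1.le))).trans (hfront t ht.1)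

theorem antitoneOn_of_deriv_le_leftFlux (hJ : ∀ z, 0 ≤ J z) (hρ : 0 ≤ ρ)
    (hl : ContDiffOn ℝ 1 l (Ici 0)) (hfront : ∀ t > 0, deriv l t ≤ -ρ * leftFlux J w l r t)
    (hw : ∀ t ≥ 0, ∀ x ∈ Icc (l t) (r t), 0 ≤ w t x) {t₁ : ℝ}
    (hlr : ∀ t ∈ Ioo 0 t₁, l t ≤ r t) : AntitoneOn l (Icc 0 t₁) := by
  refine antitoneOn_of_deriv_nonpos (convex_Icc 0 t₁) (hl.continuousOn.mono Icc_subset_Ici_self)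
    ?_ ?_ <;> rw [interior_Icc]
  · exact (hl.differentiableOn one_ne_zero).mono (Ioo_subset_Ioi_self.trans Ioi_subset_Ici_self)
  · intro t ht
    have := mul_nonneg hρ (leftFlux_nonneg hJ (hlr t ht) (hw t ht.1.le))
    linarith [hfront t ht.1]

theorem left_lt_right_of_fronts (hJ : ∀ z, 0 ≤ J z) (hρ : 0 ≤ ρ)
    (hl : ContDiffOn ℝ 1 l (Ici 0)) (hr : ContDiffOn ℝ 1 r (Ici 0))
    (hfr : ∀ t > 0, ρ * rightFlux J w l r t ≤ deriv r t)
    (hfl : ∀ t > 0, deriv l t ≤ -ρ * leftFlux J w l r t)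
    (hw : ∀ t ≥ 0, ∀ x ∈ Icc (l t) (r t), 0 ≤ w t x) (hlr₀ : l 0 < r 0) :
    ∀ t ≥ 0, l t < r t := by
  by_contra! h
  obtain ⟨t', ht', hcross⟩ := h
  set S := {t ∈ Ici (0 : ℝ) | r t ≤ l t}
  have hSbdd : BddBelow S := ⟨0, fun _ h => h.1⟩
  have hS : sInf S ∈ S :=
    (isClosed_Ici.isClosed_le hr.continuousOn hl.continuousOn).csInf_mem ⟨t', ht', hcross⟩ hSbdd
  have hbefore : ∀ t ∈ Ioo 0 (sInf S), l t ≤ r t := fun t ht =>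
    (not_le.1 fun h => (csInf_le hSbdd ⟨ht.1.le, h⟩).not_gt ht.2).le
  have hpos : 0 < sInf S := (mem_Ici.1 hS.1).lt_of_ne fun h => by
    have := hS.2
    rw [← h] at this
    linarith
  have hmono := monotoneOn_of_rightFlux_le_deriv hJ hρ hr hfr hw hbefore
    (left_mem_Icc.2 hpos.le) (right_mem_Icc.2 hpos.le) hpos.le
  have hanti := antitoneOn_of_deriv_le_leftFlux hJ hρ hl hfl hw hbefore
    (left_mem_Icc.2 hpos.le) (right_mem_Icc.2 hpos.le) hpos.le
  linarith [hS.2]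

theorem KernelCond.mul_le_rightFlux (hJ : KernelCond J) {t δ s ε c : ℝ} (hs : 0 ≤ s)
    (hε : 0 ≤ ε) (hδ : ∀ z, |z| ≤ 4 * s → δ ≤ J z)
    (hwc : ContinuousOn (w t) (Icc (l t) (r t))) (hw : ∀ x ∈ Icc (l t) (r t), 0 ≤ w t x)
    (hwε : ∀ x ∈ Icc (c - 2 * s) (c - s), ε ≤ w t x)
    (hl : l t ≤ c - 2 * s) (hr : r t ∈ Ico c (c + s)) :
    δ * s * ε * s ≤ rightFlux J w l r t := by
  have hflux : rightFlux J w l r t = ∫ x in l t..r t, (∫ z in Iio (x - r t), J z) * w t x := by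
    simp only [rightFlux, integral_mul_const, integral_Ioi_comp_sub_left]
  have hF0 (u : ℝ) : 0 ≤ ∫ z in Iio u, J z :=
    setIntegral_nonneg measurableSet_Iio fun z _ => hJ.nonneg z
  have hwindow := mul_sub_le_intervalIntegral_of_le_on (κ := δ * s * ε)
    (g := fun x => (∫ z in Iio (x - r t), J z) * w t x) hl (by linarith) (by linarith [hr.1])
    (((continuous_integral_Iio hJ.integrable).comp (continuous_sub_right _)).continuousOn.mul hwc)
    (fun x hx => mul_nonneg (hF0 _) (hw x hx))
    fun x hx => mul_le_mul (hJ.mul_le_integral_Iio hs fun z hz =>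
      hδ z (abs_le.2 ⟨by linarith [hz.1, hx.1, hr.2], by linarith [hz.2, hx.2, hr.1]⟩))
      (hwε x hx) hε (hF0 _)
  rw [hflux]
  exact le_of_eq_of_le (by ring) hwindow

end Fronts

namespace IsSupersolution

variable {J : ℝ → ℝ} {d C ρ : ℝ} {w : ℝ → ℝ → ℝ} {l r : ℝ → ℝ}

theorem continuousOn_slice (hsup : IsSupersolution J d C w l r) {t : ℝ} (ht : 0 ≤ t) :
    ContinuousOn (w t) (Icc (l t) (r t)) :=
  hsup.continuousOn.comp (Continuous.prodMk_right t).continuousOn fun _ hx => ⟨ht, hx⟩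

theorem lower_bound_of_source (hsup : IsSupersolution J d C w l r) (hB : d + C ≠ 0)
    {x u T A : ℝ} (hu : 0 ≤ u) (hx : ∀ v ∈ Icc u T, x ∈ Ioo (l v) (r v))
    (hA : ∀ v ∈ Ioo u T, A ≤ d * ∫ y in l v..r v, J (x - y) * w v y) :
    ∀ t ∈ Icc u T,
      A / (d + C) + (w u x - A / (d + C)) * exp (-((d + C) * (t - u))) ≤ w t x := by
  refine linear_ode_lower_bound (g := fun v => w v x) hB ?_ fun v hv => ?_
  · exact hsup.continuousOn.comp (Continuous.prodMk_left x).continuousOn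
      fun v hv => ⟨hu.trans hv.1, Ioo_subset_Icc_self (hx v hv)⟩
  · obtain ⟨hdiff, hpde⟩ := hsup.deriv_ge v (hu.trans_lt hv.1) x (hx v (Ioo_subset_Icc_self hv))
    exact ⟨hdiff, by linarith [hA v hv]⟩

theorem nonneg (hsup : IsSupersolution J d C w l r) (hJ : KernelCond J) (hd : 0 ≤ d)
    (hC : 0 < C) (hl : ContinuousOn l (Ici 0)) (hr : ContinuousOn r (Ici 0))
    (h₀ : ∀ x ∈ Icc (l 0) (r 0), 0 ≤ w 0 x) :
    ∀ t ≥ 0, ∀ x ∈ Icc (l t) (r t), 0 ≤ w t x := by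
  intro t ht x hx
  by_contra! hneg
  have hQ := isCompact_setOf_mem_Icc isCompact_Icc (hl.mono Icc_subset_Ici_self)
    (hr.mono Icc_subset_Ici_self) (s := Icc 0 t)
  obtain ⟨⟨ts, xs⟩, hmem, hmin⟩ := hQ.exists_isMinOn ⟨(t, x), ⟨ht, le_rfl⟩, hx⟩
    (hsup.continuousOn.mono fun p hp => ⟨hp.1.1, hp.2⟩)
  obtain ⟨hts, hxs⟩ : ts ∈ Icc 0 t ∧ xs ∈ Icc (l ts) (r ts) := hmem
  replace hmin : ∀ s y, s ∈ Icc 0 t → y ∈ Icc (l s) (r s) → w ts xs ≤ w s y :=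
    fun s y hs hy => isMinOn_iff.1 hmin (s, y) ⟨hs, hy⟩
  have hm : w ts xs < 0 := (hmin t x ⟨ht, le_rfl⟩ hx).trans_lt hneg
  have hts0 : 0 < ts := hts.1.lt_of_ne fun h => by
    subst h
    exact hm.not_ge (h₀ xs hxs)
  have hxs' : xs ∈ Ioo (l ts) (r ts) := by
    refine ⟨hxs.1.lt_of_ne fun h => ?_, hxs.2.lt_of_ne fun h => ?_⟩
    · exact hm.ne (h ▸ (hsup.boundary ts hts0).1)
    · exact hm.ne (h ▸ (hsup.boundary ts hts0).2)
  obtain ⟨hdiff, hpde⟩ := hsup.deriv_ge ts hts0 xs hxs'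
  have hI : w ts xs ≤ ∫ y in l ts..r ts, J (xs - y) * w ts y :=
    hJ.le_intervalIntegral_mul xs (hxs'.1.trans hxs'.2).le hm.le
      (hsup.continuousOn_slice hts0.le) fun y hy => hmin ts y hts hy
  have hnear : ∀ᶠ s in 𝓝 ts, 0 ≤ s ∧ l s < xs ∧ xs < r s :=
    (lt_mem_nhds hts0).mono (fun _ h => h.le) |>.and <|
      ((hl.continuousAt (Ici_mem_nhds hts0)).eventually_lt continuousAt_const hxs'.1).and
      (continuousAt_const.eventually_lt (hr.continuousAt (Ici_mem_nhds hts0)) hxs'.2)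
  -- one-sided in time: after `ts` the point may leave the region over `[0, t]`
  have hlocal : IsLocalMinOn (fun s => w s xs) (Iic ts) ts := by
    filter_upwards [self_mem_nhdsWithin, nhdsWithin_le_nhds hnear] with s hs ⟨hs0, hls, hrs⟩
    exact hmin s xs ⟨hs0, hs.trans hts.2⟩ ⟨hls.le, hrs.le⟩
  have hderiv := deriv_nonpos_of_isLocalMinOn_Iic hdiff hlocal
  linarith [mul_nonneg hd (sub_nonneg.2 hI), mul_neg_of_pos_of_neg hC hm]

theorem reflect (hsup : IsSupersolution J d C w l r) (hJ : ∀ x, J (-x) = J x) :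
    IsSupersolution J d C (fun t x => w t (-x)) (fun t => -r t) (fun t => -l t) where
  continuousOn := hsup.continuousOn.comp (continuous_fst.prodMk continuous_snd.neg).continuousOn
    fun p ⟨h0, h1, h2⟩ => ⟨h0, le_neg.1 h2, neg_le.1 h1⟩
  deriv_ge t ht x hx := by
    obtain ⟨hdiff, hpde⟩ := hsup.deriv_ge t ht (-x) ⟨lt_neg.1 hx.2, neg_lt.1 hx.1⟩
    refine ⟨hdiff, ?_⟩
    have hrefl : ∫ y in -r t..-l t, J (x - y) * w t (-y) = ∫ y in l t..r t, J (-x - y) * w t y := by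
      rw [← intervalIntegral.integral_comp_neg]
      refine intervalIntegral.integral_congr fun y _ => ?_
      simp only [neg_neg, ← hJ (x - -y)]
      ring_nf
    simpa only [hrefl] using hpde
  boundary t ht := by simpa only [neg_neg] using (hsup.boundary t ht).symm

theorem nonneg_antitoneOn_monotoneOn (hsup : IsSupersolution J d C w l r)
    (hJ : KernelCond J) (hd : 0 ≤ d) (hC : 0 < C) (hρ : 0 ≤ ρ)
    (hl : ContDiffOn ℝ 1 l (Ici 0)) (hr : ContDiffOn ℝ 1 r (Ici 0))
    (hfr : ∀ t > 0, ρ * rightFlux J w l r t ≤ deriv r t)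
    (hfl : ∀ t > 0, deriv l t ≤ -ρ * leftFlux J w l r t)
    (hlr₀ : l 0 < r 0) (h₀ : ∀ x ∈ Icc (l 0) (r 0), 0 ≤ w 0 x) :
    (∀ t ≥ 0, ∀ x ∈ Icc (l t) (r t), 0 ≤ w t x) ∧ AntitoneOn l (Ici 0) ∧ MonotoneOn r (Ici 0) := by
  have hw := hsup.nonneg hJ hd hC hl.continuousOn hr.continuousOn h₀
  have hlr := left_lt_right_of_fronts hJ.nonneg hρ hl hr hfr hfl hw hlr₀
  refine ⟨hw, fun a ha b hb hab => ?_, fun a ha b hb hab => ?_⟩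
  · exact antitoneOn_of_deriv_le_leftFlux hJ.nonneg hρ hl hfl hw (t₁ := b)
      (fun t ht => (hlr t ht.1.le).le) ⟨ha, hab⟩ ⟨hb, le_rfl⟩ hab
  · exact monotoneOn_of_rightFlux_le_deriv hJ.nonneg hρ hr hfr hw (t₁ := b)
      (fun t ht => (hlr t ht.1.le).le) ⟨ha, hab⟩ ⟨hb, le_rfl⟩ hab

theorem exp_mul_le_of_initial (hsup : IsSupersolution J d C w l r)
    (hJ : ∀ z, 0 ≤ J z) (hd : 0 ≤ d) (hB : 0 < d + C)
    (hw : ∀ t ≥ 0, ∀ x ∈ Icc (l t) (r t), 0 ≤ w t x) {x m T : ℝ}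
    (hx : ∀ t ∈ Icc 0 T, x ∈ Ioo (l t) (r t)) (hm : m ≤ w 0 x) :
    ∀ t ∈ Icc 0 T, m * exp (-((d + C) * T)) ≤ w t x := by
  intro t ht
  have hbound := hsup.lower_bound_of_source (A := 0) hB.ne' le_rfl hx (fun v hv =>
    have hv' := Ioo_subset_Icc_self hv
    mul_nonneg hd (intervalIntegral.integral_nonneg ((hx v hv').1.trans (hx v hv').2).le
      fun y hy => mul_nonneg (hJ _) (hw v hv'.1 y hy))) t ht
  simp only [zero_div, sub_zero, zero_add] at hbound
  refine le_trans (mul_le_mul hm (exp_le_exp.2 ?_) (exp_pos _).le ?_) hbound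
  · exact neg_le_neg (mul_le_mul_of_nonneg_left ht.2 hB.le)
  · exact hw 0 le_rfl x (Ioo_subset_Icc_self (hx 0 (left_mem_Icc.2 (ht.1.trans ht.2))))

theorem front_advance (hsup : IsSupersolution J d C w l r) (hJ : KernelCond J)
    (hρ : 0 ≤ ρ) (hr : ContDiffOn ℝ 1 r (Ici 0)) (hmono : MonotoneOn r (Ici 0))
    (hfront : ∀ t > 0, ρ * rightFlux J w l r t ≤ deriv r t)
    (hw : ∀ t ≥ 0, ∀ x ∈ Icc (l t) (r t), 0 ≤ w t x)
    {δ s ε c t₀ t₁ : ℝ} (hs : 0 ≤ s) (hε : 0 ≤ ε) (hδ : ∀ z, |z| ≤ 4 * s → δ ≤ J z)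
    (ht₀ : 0 ≤ t₀) (ht : t₀ ≤ t₁) (hl : ∀ t ∈ Icc t₀ t₁, l t ≤ c - 2 * s) (hc : c ≤ r t₀)
    (hwε : ∀ t ∈ Icc t₀ t₁, ∀ x ∈ Icc (c - 2 * s) (c - s), ε ≤ w t x)
    (hspeed : s ≤ ρ * (δ * s * ε * s) * (t₁ - t₀)) : c + s ≤ r t₁ := by
  by_contra! hlt
  have hsub : Icc t₀ t₁ ⊆ Ici 0 := fun t ht => ht₀.trans ht.1
  have hderiv : ∀ t ∈ interior (Icc t₀ t₁), ρ * (δ * s * ε * s) ≤ deriv r t := by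
    rw [interior_Icc]
    intro t hτ
    have hτ' := Ioo_subset_Icc_self hτ
    have ht0 : 0 < t := ht₀.trans_lt hτ.1
    have hrt : r t ∈ Ico c (c + s) := ⟨hc.trans (hmono ht₀ ht0.le hτ.1.le),
      (hmono ht0.le (hsub (right_mem_Icc.2 ht)) hτ.2.le).trans_lt hlt⟩
    exact (mul_le_mul_of_nonneg_left (hJ.mul_le_rightFlux hs hε hδ (hsup.continuousOn_slice ht0.le)
      (hw t ht0.le) (hwε t hτ') (hl t hτ') hrt) hρ).trans (hfront t ht0)
  have hgrowth := (convex_Icc t₀ t₁).mul_sub_le_image_sub_of_le_deriv (hr.continuousOn.mono hsub)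
    ((hr.differentiableOn one_ne_zero).mono (interior_subset.trans hsub)) hderiv
    t₀ (left_mem_Icc.2 ht) t₁ (right_mem_Icc.2 ht) ht
  linarith

theorem window_lower_bound (hsup : IsSupersolution J d C w l r)
    (hJ : KernelCond J) (hd : 0 ≤ d) (hB : 0 < d + C)
    (hw : ∀ t ≥ 0, ∀ x ∈ Icc (l t) (r t), 0 ≤ w t x)
    {δ s ε c u θ T : ℝ} (hs : 0 < s) (hε : 0 ≤ ε) (hδ0 : 0 ≤ δ)
    (hδ : ∀ z, |z| ≤ 4 * s → δ ≤ J z) (hθ : 0 ≤ θ) (hu : 0 ≤ u)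
    (hl : ∀ t ∈ Icc u T, l t < c - 2 * s) (hr : ∀ t ∈ Icc u T, c + s ≤ r t)
    (hwε : ∀ t ∈ Icc u T, ∀ x ∈ Icc (c - 2 * s) (c - s), ε ≤ w t x) :
    ∀ t ∈ Icc (u + θ) T, ∀ x ∈ Icc (c - s) c,
      ε * (d * δ * s * (1 - exp (-((d + C) * θ))) / (d + C)) ≤ w t x := by
  intro t ht x hx
  have hx' : ∀ v ∈ Icc u T, x ∈ Ioo (l v) (r v) := fun v hv =>
    ⟨by linarith [hl v hv, hx.1], by linarith [hr v hv, hx.2]⟩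
  have hsource : ∀ v ∈ Ioo u T, d * (δ * ε * s) ≤ d * ∫ y in l v..r v, J (x - y) * w v y := by
    intro v hv
    have hv' := Ioo_subset_Icc_self hv
    have hv0 : 0 ≤ v := hu.trans hv'.1
    refine mul_le_mul_of_nonneg_left ?_ hd
    have hwindow := mul_sub_le_intervalIntegral_of_le_on (κ := δ * ε)
      (g := fun y => J (x - y) * w v y) (hl v hv').le
      (by linarith) (by linarith [hr v hv'])
      ((hJ.continuous.comp (continuous_sub_left x)).continuousOn.mul (hsup.continuousOn_slice hv0))
      (fun y hy => mul_nonneg (hJ.nonneg _) (hw v hv0 y hy))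
      fun y hy => mul_le_mul (hδ _ (abs_le.2 ⟨by linarith [hx.1, hy.2], by linarith [hx.2, hy.1]⟩))
        (hwε v hv' y hy) hε (hJ.nonneg _)
    exact le_of_eq_of_le (by ring) hwindow
  have huT : u ≤ T := by linarith [ht.1, ht.2]
  have hbound := hsup.lower_bound_of_source hB.ne' hu hx' hsource t ⟨by linarith [ht.1], ht.2⟩
  have hwu : 0 ≤ w u x * exp (-((d + C) * (t - u))) :=
    mul_nonneg (hw u hu x (Ioo_subset_Icc_self (hx' u ⟨le_rfl, huT⟩))) (exp_pos _).le
  have hdecay : exp (-((d + C) * (t - u))) ≤ exp (-((d + C) * θ)) :=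
    exp_le_exp.2 (neg_le_neg (mul_le_mul_of_nonneg_left (by linarith [ht.1]) hB.le))
  have hA : 0 ≤ d * (δ * ε * s) / (d + C) := by positivity
  calc ε * (d * δ * s * (1 - exp (-((d + C) * θ))) / (d + C))
      = d * (δ * ε * s) / (d + C) * (1 - exp (-((d + C) * θ))) := by ring
    _ ≤ d * (δ * ε * s) / (d + C) * (1 - exp (-((d + C) * (t - u)))) :=
        mul_le_mul_of_nonneg_left (by linarith) hA
    _ ≤ w t x := by nlinarith

theorem spreading_step (hsup : IsSupersolution J d C w l r) (hJ : KernelCond J)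
    (hd : 0 ≤ d) (hB : 0 < d + C) (hρ : 0 ≤ ρ) (hr : ContDiffOn ℝ 1 r (Ici 0))
    (hmono : MonotoneOn r (Ici 0)) (hfront : ∀ t > 0, ρ * rightFlux J w l r t ≤ deriv r t)
    (hw : ∀ t ≥ 0, ∀ x ∈ Icc (l t) (r t), 0 ≤ w t x)
    {δ s ε c t₀ τ T : ℝ} (hs : 0 < s) (hε : 0 ≤ ε) (hδ0 : 0 ≤ δ)
    (hδ : ∀ z, |z| ≤ 4 * s → δ ≤ J z) (ht₀ : 0 ≤ t₀) (hτ : 0 < τ) (hT : t₀ + τ ≤ T)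
    (hρε : 2 ≤ ρ * (δ * s * τ * ε)) (hl : ∀ t ≥ 0, l t < c - 2 * s) (hc : c ≤ r t₀)
    (hwε : ∀ t ∈ Icc t₀ T, ∀ x ∈ Icc (c - 2 * s) (c - s), ε ≤ w t x) :
    c + s ≤ r (t₀ + τ) ∧ ∀ t ∈ Icc (t₀ + τ) T, ∀ x ∈ Icc (c - s) c,
      ε * (d * δ * s * (1 - exp (-((d + C) * (τ / 2)))) / (d + C)) ≤ w t x := by
  have hmid : 0 ≤ t₀ + τ / 2 := by positivity
  have hadv : c + s ≤ r (t₀ + τ / 2) :=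
    hsup.front_advance hJ hρ hr hmono hfront hw hs.le hε hδ ht₀ (by linarith)
      (fun t ht => (hl t (ht₀.trans ht.1)).le) hc
      (fun t ht => hwε t ⟨ht.1, by linarith [ht.2]⟩) (by nlinarith)
  have hwin := hsup.window_lower_bound hJ hd hB hw hs hε hδ0 hδ
    (u := t₀ + τ / 2) (θ := τ / 2) (T := T) (by positivity) hmid
    (fun t ht => hl t (hmid.trans ht.1))
    (fun t ht => hadv.trans (hmono hmid (hmid.trans ht.1) ht.1))
    (fun t ht => hwε t ⟨by linarith [ht.1], ht.2⟩)
  exact ⟨hadv.trans (hmono hmid (mem_Ici.2 (by positivity)) (by linarith)),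
    fun t ht => hwin t ⟨by linarith [ht.1], ht.2⟩⟩

theorem front_advance_iterate (hsup : IsSupersolution J d C w l r) (hJ : KernelCond J)
    (hd : 0 ≤ d) (hB : 0 < d + C) (hρ : 0 ≤ ρ) (hr : ContDiffOn ℝ 1 r (Ici 0))
    (hmono : MonotoneOn r (Ici 0)) (hfront : ∀ t > 0, ρ * rightFlux J w l r t ≤ deriv r t)
    (hw : ∀ t ≥ 0, ∀ x ∈ Icc (l t) (r t), 0 ≤ w t x)
    {δ s τ γ ε c T : ℝ} {N : ℕ} (hs : 0 < s) (hδ0 : 0 ≤ δ) (hδ : ∀ z, |z| ≤ 4 * s → δ ≤ J z)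
    (hτ : 0 < τ) (hNτ : N * τ ≤ T) (hγ0 : 0 ≤ γ) (hγ1 : γ ≤ 1)
    (hγ : γ ≤ d * δ * s * (1 - exp (-((d + C) * (τ / 2)))) / (d + C)) (hε : 0 ≤ ε)
    (hρε : 2 ≤ ρ * (δ * s * τ * (ε * γ ^ N))) (hl : ∀ t ≥ 0, l t < c - 2 * s) (hc : c ≤ r 0)
    (hwε : ∀ t ∈ Icc 0 T, ∀ x ∈ Icc (c - 2 * s) (c - s), ε ≤ w t x) :
    c + N * s ≤ r (N * τ) := by
  suffices h : ∀ k ≤ N, c + k * s ≤ r (k * τ) ∧ ∀ t ∈ Icc (k * τ) T,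
      ∀ x ∈ Icc (c + k * s - 2 * s) (c + k * s - s), ε * γ ^ k ≤ w t x from (h N le_rfl).1
  intro k hk
  induction k with
  | zero =>
    simp only [CharP.cast_eq_zero, zero_mul, add_zero, pow_zero, mul_one]
    exact ⟨hc, hwε⟩
  | succ k ih =>
    obtain ⟨hfront_k, hwin_k⟩ := ih (Nat.le_of_succ_le hk)
    have hkN : (k : ℝ) + 1 ≤ N := by exact_mod_cast hk
    have hρε_k : 2 ≤ ρ * (δ * s * τ * (ε * γ ^ k)) :=
      hρε.trans (mul_le_mul_of_nonneg_left (mul_le_mul_of_nonneg_left (mul_le_mul_of_nonneg_left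
        (pow_le_pow_of_le_one hγ0 hγ1 (Nat.le_of_succ_le hk)) hε) (by positivity)) hρ)
    obtain ⟨hadv, hwin⟩ := hsup.spreading_step hJ hd hB hρ hr hmono hfront hw hs
      (by positivity) hδ0 hδ (by positivity) hτ (by nlinarith) hρε_k
      (fun t ht => by linarith [hl t ht, (by positivity : (0 : ℝ) ≤ k * s)]) hfront_k hwin_k
    simp only [Nat.cast_succ, add_one_mul, pow_succ]
    refine ⟨by linarith [hadv], fun t ht x hx => ?_⟩
    rw [← mul_assoc]
    calc ε * γ ^ k * γ
        ≤ ε * γ ^ k * (d * δ * s * (1 - exp (-((d + C) * (τ / 2)))) / (d + C)) :=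
          mul_le_mul_of_nonneg_left hγ (by positivity)
      _ ≤ w t x := hwin t ht x ⟨by linarith [hx.1], by linarith [hx.2]⟩

end IsSupersolution

theorem exists_rho_right_front_eventually_ge {J : ℝ → ℝ} (hJ : KernelCond J) {d C : ℝ}
    (hd : 0 < d) (hC : 0 < C) (H : ℝ) {r₀ : ℝ} (hr₀ : 0 < r₀) {w₀ : ℝ → ℝ}
    (hw₀c : ContinuousOn w₀ (Icc (-r₀) r₀)) (hw₀ : ∀ x ∈ Icc (-r₀) r₀, 0 ≤ w₀ x)
    (hw₀pos : ∀ x ∈ Ioo (-r₀) r₀, 0 < w₀ x) :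
    ∃ ρ₀ > 0, ∀ ρ ≥ ρ₀, ∀ (w : ℝ → ℝ → ℝ) (l r : ℝ → ℝ),
      ContDiffOn ℝ 1 l (Ici 0) → ContDiffOn ℝ 1 r (Ici 0) → r 0 = r₀ → l 0 = -r₀ →
      IsSupersolution J d C w l r →
      (∀ t > 0, ρ * rightFlux J w l r t ≤ deriv r t) →
      (∀ t > 0, deriv l t ≤ -ρ * leftFlux J w l r t) →
      (∀ x ∈ Icc (-r₀) r₀, w 0 x = w₀ x) →
      ∀ y < H, ∀ᶠ t in atTop, y ≤ r t := by
  obtain ⟨δ, hδ, σ, hσ, hJδ⟩ := hJ.exists_pos_le_of_abs_le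
  -- `4 s ≤ σ` covers every kernel argument met in a step; `4 s ≤ r₀` keeps the first window
  -- well inside `(-r₀, r₀)`
  set s := min (σ / 4) (r₀ / 4)
  have hs : 0 < s := lt_min (by positivity) (by positivity)
  have hsδ : ∀ z, |z| ≤ 4 * s → δ ≤ J z := fun z hz =>
    hJδ z (by linarith [min_le_left (σ / 4) (r₀ / 4)])
  have hsr : 4 * s ≤ r₀ := by linarith [min_le_right (σ / 4) (r₀ / 4)]
  have hwindow : Icc (r₀ - 2 * s) (r₀ - s) ⊆ Ioo (-r₀) r₀ :=
    Icc_subset_Ioo (by linarith) (by linarith)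
  obtain ⟨x₀, hx₀, hmin⟩ := isCompact_Icc.exists_isMinOn (nonempty_Icc.2 (by linarith))
    (hw₀c.mono (hwindow.trans Ioo_subset_Icc_self))
  have hB : 0 < d + C := by positivity
  set N := ⌈(H - r₀) / s⌉₊
  set τ : ℝ := 1 / (N + 1)
  have hτ : 0 < τ := by positivity
  have hNτ : N * τ ≤ 1 := by
    rw [mul_one_div, div_le_one (by positivity)]
    linarith
  set γ := min (d * δ * s * (1 - exp (-((d + C) * (τ / 2)))) / (d + C)) 1
  have hγ : 0 < γ := by
    have : exp (-((d + C) * (τ / 2))) < 1 :=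
      exp_lt_one_iff.2 (neg_lt_zero.2 (by positivity))
    exact lt_min (div_pos (mul_pos (by positivity) (by linarith)) hB) one_pos
  have hm : 0 < w₀ x₀ * exp (-((d + C) * 1)) := mul_pos (hw₀pos x₀ (hwindow hx₀)) (exp_pos _)
  refine ⟨2 / (δ * s * τ * (w₀ x₀ * exp (-((d + C) * 1)) * γ ^ N)), by positivity,
    fun ρ hρ w l r hl hr hr0 hl0 hsup hfr hfl hinit y hy => ?_⟩
  have hρ0 : 0 < ρ := lt_of_lt_of_le (by positivity) hρ
  obtain ⟨hw, hanti, hmono⟩ := hsup.nonneg_antitoneOn_monotoneOn hJ hd.le hC hρ0.le hl hr hfr hfl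
    (by linarith) fun x hx => by
      rw [hl0, hr0] at hx
      exact (hinit x hx).symm ▸ hw₀ x hx
  have hlle : ∀ t ≥ 0, l t ≤ -r₀ := fun t ht => hl0 ▸ hanti (mem_Ici.2 le_rfl) ht ht
  have hrge : ∀ t ≥ 0, r₀ ≤ r t := fun t ht => hr0 ▸ hmono (mem_Ici.2 le_rfl) ht ht
  have hinitial : ∀ t ∈ Icc 0 1, ∀ x ∈ Icc (r₀ - 2 * s) (r₀ - s),
      w₀ x₀ * exp (-((d + C) * 1)) ≤ w t x := fun t ht x hx =>
    hsup.exp_mul_le_of_initial hJ.nonneg hd.le hB hw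
      (fun v hv => ⟨by linarith [hlle v hv.1, hx.1], by linarith [hrge v hv.1, hx.2]⟩)
      ((hmin hx).trans_eq (hinit x (Ioo_subset_Icc_self (hwindow hx))).symm) t ht
  have hfront := hsup.front_advance_iterate hJ hd.le hB hρ0.le hr hmono hfr hw hs hδ.le hsδ
    hτ hNτ hγ.le (min_le_right _ _) (min_le_left _ _) hm.le
    (by rwa [ge_iff_le, div_le_iff₀ (by positivity)] at hρ)
    (fun t ht => by linarith [hlle t ht]) (hrge 0 le_rfl) hinitial
  have hNs : H - r₀ ≤ N * s := (div_le_iff₀ hs).1 (Nat.le_ceil _)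
  have hNτ0 : (0 : ℝ) ≤ N * τ := by positivity
  filter_upwards [eventually_ge_atTop (N * τ)] with t ht
  linarith [hmono hNτ0 (hNτ0.trans ht) ht]

theorem exists_rho_left_front_eventually_le {J : ℝ → ℝ} (hJ : KernelCond J) {d C : ℝ}
    (hd : 0 < d) (hC : 0 < C) (H : ℝ) {r₀ : ℝ} (hr₀ : 0 < r₀) {w₀ : ℝ → ℝ}
    (hw₀c : ContinuousOn w₀ (Icc (-r₀) r₀)) (hw₀ : ∀ x ∈ Icc (-r₀) r₀, 0 ≤ w₀ x)
    (hw₀pos : ∀ x ∈ Ioo (-r₀) r₀, 0 < w₀ x) :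
    ∃ ρ₀ > 0, ∀ ρ ≥ ρ₀, ∀ (w : ℝ → ℝ → ℝ) (l r : ℝ → ℝ),
      ContDiffOn ℝ 1 l (Ici 0) → ContDiffOn ℝ 1 r (Ici 0) → r 0 = r₀ → l 0 = -r₀ →
      IsSupersolution J d C w l r →
      (∀ t > 0, ρ * rightFlux J w l r t ≤ deriv r t) →
      (∀ t > 0, deriv l t ≤ -ρ * leftFlux J w l r t) →
      (∀ x ∈ Icc (-r₀) r₀, w 0 x = w₀ x) →
      ∀ y > -H, ∀ᶠ t in atTop, l t ≤ y := by
  have hneg : MapsTo (fun x : ℝ => -x) (Icc (-r₀) r₀) (Icc (-r₀) r₀) := fun x hx =>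
    ⟨neg_le_neg hx.2, by simpa using neg_le_neg hx.1⟩
  obtain ⟨ρ₀, hρ₀, hright⟩ := exists_rho_right_front_eventually_ge hJ hd hC H hr₀
    (hw₀c.comp continuous_neg.continuousOn hneg) (fun x hx => hw₀ _ (hneg hx))
    (fun x hx => hw₀pos (-x) ⟨neg_lt_neg hx.2, by simpa using neg_lt_neg hx.1⟩)
  refine ⟨ρ₀, hρ₀, fun ρ hρ w l r hl hr hr0 hl0 hsup hfr hfl hinit y hy => ?_⟩
  have hreflected := hright ρ hρ _ _ _ hr.neg hl.neg (by simp [hl0]) (by simp [hr0])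
    (hsup.reflect hJ.symm)
    (fun t ht => by rw [rightFlux_reflect hJ.symm, deriv.fun_neg]; linarith [hfl t ht])
    (fun t ht => by rw [leftFlux_reflect hJ.symm, deriv.fun_neg]; linarith [hfr t ht])
    (fun x hx => hinit (-x) (hneg hx)) (-y) (by linarith)
  filter_upwards [hreflected] with t ht
  linarith

theorem boundary_expansion_for_large_rho_general
    (J : ℝ → ℝ) (hJ : KernelCond J) (d C : ℝ) (hd : 0 < d) (hC : 0 < C)
    (H r₀ : ℝ) (hr₀ : 0 < r₀)
    (w₀ : ℝ → ℝ) (hw₀c : ContinuousOn w₀ (Icc (-r₀) r₀))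
    (hw₀l : w₀ (-r₀) = 0) (hw₀r : w₀ r₀ = 0)
    (hw₀pos : ∀ x ∈ Ioo (-r₀) r₀, 0 < w₀ x) :
    ∃ ρ₀ : ℝ, 0 < ρ₀ ∧
      ∀ ρ : ℝ, ρ₀ ≤ ρ →
      ∀ (w : ℝ → ℝ → ℝ) (l r : ℝ → ℝ),
        ContDiffOn ℝ 1 l (Ici 0) → ContDiffOn ℝ 1 r (Ici 0) →
        r 0 = r₀ → l 0 = -r₀ →
        ContinuousOn (fun p : ℝ × ℝ => w p.1 p.2)
          {p : ℝ × ℝ | 0 ≤ p.1 ∧ p.2 ∈ Icc (l p.1) (r p.1)} →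
        (∀ t > 0, ∀ x ∈ Ioo (l t) (r t),
          DifferentiableAt ℝ (fun s => w s x) t ∧
          d * ((∫ y in l t..r t, J (x - y) * w t y) - w t x) - C * w t x ≤
            deriv (fun s => w s x) t) →
        (∀ t > 0, w t (l t) = 0 ∧ w t (r t) = 0) →
        (∀ t > 0, ρ * ∫ x in l t..r t, ∫ y in Ioi (r t), J (x - y) * w t x ≤ deriv r t) →
        (∀ t > 0, deriv l t ≤ -ρ * ∫ x in l t..r t, ∫ y in Iio (l t), J (x - y) * w t x) →
        (∀ x ∈ Icc (-r₀) r₀, w 0 x = w₀ x) →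
        (∀ y < H, ∀ᶠ t in atTop, y ≤ r t) ∧ (∀ y > -H, ∀ᶠ t in atTop, l t ≤ y) := by
  have hw₀ : ∀ x ∈ Icc (-r₀) r₀, 0 ≤ w₀ x := fun x hx => by
    rcases hx.1.eq_or_lt with rfl | h₁
    · exact hw₀l.ge
    rcases hx.2.eq_or_lt with rfl | h₂
    · exact hw₀r.ge
    exact (hw₀pos x ⟨h₁, h₂⟩).le
  obtain ⟨ρ₁, hρ₁, hright⟩ :=
    exists_rho_right_front_eventually_ge hJ hd hC H hr₀ hw₀c hw₀ hw₀pos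
  obtain ⟨ρ₂, -, hleft⟩ := exists_rho_left_front_eventually_le hJ hd hC H hr₀ hw₀c hw₀ hw₀pos
  refine ⟨max ρ₁ ρ₂, lt_max_of_lt_left hρ₁,
    fun ρ hρ w l r hl hr hr0 hl0 hwc hpde hbdry hfr hfl hinit => ⟨?_, ?_⟩⟩
  · exact hright ρ (le_of_max_le_left hρ) w l r hl hr hr0 hl0 ⟨hwc, hpde, hbdry⟩ hfr hfl hinit
  · exact hleft ρ (le_of_max_le_right hρ) w l r hl hr hr0 hl0 ⟨hwc, hpde, hbdry⟩ hfr hfl hinit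

/-- Lemma 5.2: for large enough `ρ`, any supersolution triple `(w, l, r)` of the
nonlocal problem with expanding boundaries spreads beyond any prescribed level `H`:
`liminf r ≥ H` and `limsup l ≤ -H`. -/
theorem boundary_expansion_for_large_rho
    (J : ℝ → ℝ) (hJ : KernelCond J) (d C : ℝ) (hd : 0 < d) (hC : 0 < C)
    (H r₀ : ℝ) (hr₀ : 0 < r₀) (hH : r₀ < H)
    (w₀ : ℝ → ℝ) (hw₀c : ContinuousOn w₀ (Icc (-r₀) r₀))
    (hw₀l : w₀ (-r₀) = 0) (hw₀r : w₀ r₀ = 0)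
    (hw₀pos : ∀ x ∈ Ioo (-r₀) r₀, 0 < w₀ x) :
    ∃ ρ₀ : ℝ, 0 < ρ₀ ∧
      ∀ ρ : ℝ, ρ₀ ≤ ρ →
      ∀ (w : ℝ → ℝ → ℝ) (l r : ℝ → ℝ),
        ContDiffOn ℝ 1 l (Ici 0) → ContDiffOn ℝ 1 r (Ici 0) →
        r 0 = r₀ → l 0 = -r₀ →
        ContinuousOn (fun p : ℝ × ℝ => w p.1 p.2)
          {p : ℝ × ℝ | 0 ≤ p.1 ∧ p.2 ∈ Icc (l p.1) (r p.1)} →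
        (∀ t > 0, ∀ x ∈ Ioo (l t) (r t),
          DifferentiableAt ℝ (fun s => w s x) t ∧
          d * ((∫ y in l t..r t, J (x - y) * w t y) - w t x) - C * w t x ≤
            deriv (fun s => w s x) t) →
        (∀ t > 0, w t (l t) = 0 ∧ w t (r t) = 0) →
        (∀ t > 0, ρ * ∫ x in l t..r t, ∫ y in Ioi (r t), J (x - y) * w t x ≤ deriv r t) →
        (∀ t > 0, deriv l t ≤ -ρ * ∫ x in l t..r t, ∫ y in Iio (l t), J (x - y) * w t x) →
        (∀ x ∈ Icc (-r₀) r₀, w 0 x = w₀ x) →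
        (∀ y < H, ∀ᶠ t in atTop, y ≤ r t) ∧ (∀ y > -H, ∀ᶠ t in atTop, l t ≤ y) :=
  boundary_expansion_for_large_rho_general J hJ d C hd hC H r₀ hr₀ w₀ hw₀c hw₀l hw₀r hw₀pos
end

section
/- (Maximum principle on a moving domain.) Let J satisfy condition (J1), let d > 0, T > 0, h₀ > 0, and let η, r ∈ C¹([0,T]) with r(0) = -η(0) = h₀, r strictly increasing and η strictly decreasing. Set D = {(t,x) : 0 < t ≤ T, η(t) < x < r(t)}. Suppose ψ is continuous on D̄, continuously differentiable in t, and for some bounded measurable function ϱ on D it satisfies ψ_t(t,x) ≥ d ∫_{η(t)}^{r(t)} J(x-y) ψ(t,y) dy - d ψ(t,x) + ϱ(t,x) ψ(t,x) for (t,x) ∈ D, ψ(t, η(t)) ≥ 0 and ψ(t, r(t)) ≥ 0 for 0 ≤ t ≤ T, and ψ(0,x) ≥ 0 for |x| ≤ h₀. Then ψ ≥ 0 on D̄. Moreover, if ψ(0,·) is not identically 0 on [-h₀, h₀], then ψ > 0 in D. -/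
open MeasureTheory Filter Set Topology Real

lemma deriv_nonpos_of_left_min {f : ℝ → ℝ} {a δ : ℝ} (hδ : 0 < δ)
    (hdiff : DifferentiableAt ℝ f a) (hmin : ∀ t ∈ Ico (a - δ) a, f a ≤ f t) :
    deriv f a ≤ 0 := by
  have h := hdiff.hasDerivAt
  rw [hasDerivAt_iff_tendsto_slope] at h
  have h' : Tendsto (slope f a) (𝓝[<] a) (𝓝 (deriv f a)) :=
    h.mono_left (nhdsWithin_mono _ (fun x hx => ne_of_lt hx))
  refine le_of_tendsto h' ?_
  have hmem : Ioo (a - δ) a ∈ 𝓝[<] a := by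
    rw [show Ioo (a - δ) a = Ioi (a - δ) ∩ Iio a by ext x; simp [Set.mem_Ioo, and_comm]]
    exact Filter.inter_mem (mem_nhdsWithin_of_mem_nhds (Ioi_mem_nhds (by linarith)))
      self_mem_nhdsWithin
  filter_upwards [hmem] with t ht
  rw [slope_def_field]
  have h1 : 0 ≤ f t - f a := sub_nonneg.2 (hmin t ⟨le_of_lt ht.1, ht.2⟩)
  have h2 : t - a < 0 := sub_neg.2 ht.2
  exact div_nonpos_of_nonneg_of_nonpos h1 h2.le

lemma integral_pos_of_pos_at {f : ℝ → ℝ} {a b y : ℝ}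
    (hcont : ContinuousOn f (Icc a b)) (hnn : ∀ z ∈ Icc a b, 0 ≤ f z)
    (hy : y ∈ Ioo a b) (hfy : 0 < f y) : 0 < ∫ z in a..b, f z := by
  have hab : a ≤ b := le_of_lt (lt_trans hy.1 hy.2)
  have hca : ContinuousAt f y := hcont.continuousAt (Icc_mem_nhds hy.1 hy.2)
  have hev : ∀ᶠ z in 𝓝 y, 0 < f z := hca.preimage_mem_nhds (Ioi_mem_nhds hfy)
  obtain ⟨ε, hε, hball⟩ := Metric.eventually_nhds_iff.1 hev
  set ε₂ := min ε (b - y) with hε₂def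
  have hε₂ : 0 < ε₂ := lt_min hε (by linarith [hy.2])
  have hint : IntegrableOn f (Ioc a b) := (hcont.integrableOn_Icc).mono_set Ioc_subset_Icc_self
  rw [intervalIntegral.integral_of_le hab]
  rw [setIntegral_pos_iff_support_of_nonneg_ae ?hnn hint]
  case hnn =>
    rw [EventuallyLE, ae_restrict_iff' measurableSet_Ioc]
    exact Eventually.of_forall fun z hz => hnn z (Ioc_subset_Icc_self hz)
  refine lt_of_lt_of_le ?_ (measure_mono (?_ : Ioo y (y + ε₂) ⊆ _))
  · rw [Real.volume_Ioo]
    simp only [ENNReal.ofReal_pos]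
    linarith
  · intro z hz
    have h1 : 0 < f z := hball (by rw [Real.dist_eq, abs_lt]; constructor <;>
      [linarith [hz.1]; linarith [hz.2, min_le_left ε (b - y)]])
    exact ⟨ne_of_gt h1, ⟨lt_trans hy.1 hz.1, by linarith [hz.2, min_le_right ε (b - y)]⟩⟩

lemma exists_left_window {η r : ℝ → ℝ} {T t₀ x : ℝ}
    (hηc : ContinuousOn η (Icc 0 T)) (hrc : ContinuousOn r (Icc 0 T))
    (ht₀ : t₀ ∈ Ioc 0 T) (hx : η t₀ < x) (hx' : x < r t₀) :
    ∃ δ > 0, ∀ t ∈ Ico (t₀ - δ) t₀, t ∈ Icc 0 T ∧ η t < x ∧ x < r t := by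
  have ht₀m : t₀ ∈ Icc 0 T := ⟨ht₀.1.le, ht₀.2⟩
  have hη := Metric.continuousWithinAt_iff.1 (hηc t₀ ht₀m)
  have hr := Metric.continuousWithinAt_iff.1 (hrc t₀ ht₀m)
  obtain ⟨δ₁, hδ₁, hη1⟩ := hη (x - η t₀) (by linarith)
  obtain ⟨δ₂, hδ₂, hr1⟩ := hr (r t₀ - x) (by linarith)
  refine ⟨min (min δ₁ δ₂) t₀ / 2,
    lt_min (lt_min hδ₁ hδ₂) ht₀.1 |> fun h => by linarith, fun t ht => ?_⟩
  have h1 : min (min δ₁ δ₂) t₀ / 2 ≤ δ₁ / 2 := by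
    have := min_le_left (min δ₁ δ₂) t₀; have := min_le_left δ₁ δ₂; linarith
  have h2 : min (min δ₁ δ₂) t₀ / 2 ≤ δ₂ / 2 := by
    have := min_le_left (min δ₁ δ₂) t₀; have := min_le_right δ₁ δ₂; linarith
  have h3 : min (min δ₁ δ₂) t₀ / 2 ≤ t₀ / 2 := by
    have := min_le_right (min δ₁ δ₂) t₀; linarith
  have htm : t ∈ Icc 0 T := ⟨by nlinarith [ht.1, ht₀.1], le_trans ht.2.le ht₀.2⟩
  have hdist : dist t t₀ < min δ₁ δ₂ := by
    rw [Real.dist_eq, abs_lt]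
    constructor
    · have := ht.1; have h4 : min (min δ₁ δ₂) t₀ / 2 < min δ₁ δ₂ := by
        have := min_le_left (min δ₁ δ₂) t₀
        have : (0:ℝ) < min δ₁ δ₂ := lt_min hδ₁ hδ₂
        linarith [min_le_left (min δ₁ δ₂) t₀]
      linarith
    · have := ht.2; have : (0:ℝ) < min δ₁ δ₂ := lt_min hδ₁ hδ₂; linarith
  refine ⟨htm, ?_, ?_⟩
  · have := hη1 htm (lt_of_lt_of_le hdist (min_le_left _ _))
    rw [Real.dist_eq, abs_lt] at this; linarith [this.2]
  · have := hr1 htm (lt_of_lt_of_le hdist (min_le_right _ _))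
    rw [Real.dist_eq, abs_lt] at this; linarith [this.1]

/-- Lemma 2.1 (maximum principle on a moving domain). -/
theorem maximum_principle_moving_domain
    (J : ℝ → ℝ) (hJ : KernelCond J) (d T h₀ : ℝ)
    (hd : 0 < d) (hT : 0 < T) (hh₀ : 0 < h₀)
    (η r : ℝ → ℝ)
    (hηC1 : ContDiffOn ℝ 1 η (Icc 0 T)) (hrC1 : ContDiffOn ℝ 1 r (Icc 0 T))
    (hr0 : r 0 = h₀) (hη0 : η 0 = -h₀)
    (hrmono : StrictMonoOn r (Icc 0 T)) (hηanti : StrictAntiOn η (Icc 0 T))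
    (ψ : ℝ → ℝ → ℝ)
    (hψcont : ContinuousOn (fun p : ℝ × ℝ => ψ p.1 p.2)
      {p : ℝ × ℝ | p.1 ∈ Icc 0 T ∧ p.2 ∈ Icc (η p.1) (r p.1)})
    (ϱ : ℝ → ℝ → ℝ) (hϱmeas : Measurable (Function.uncurry ϱ))
    (hϱbdd : ∃ M, ∀ t x, |ϱ t x| ≤ M)
    (hψ_pde : ∀ t ∈ Ioc 0 T, ∀ x ∈ Ioo (η t) (r t),
      DifferentiableAt ℝ (fun s => ψ s x) t ∧
      d * ((∫ y in η t..r t, J (x - y) * ψ t y) - ψ t x) + ϱ t x * ψ t x ≤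
        deriv (fun s => ψ s x) t)
    (hbdry : ∀ t ∈ Icc 0 T, 0 ≤ ψ t (η t) ∧ 0 ≤ ψ t (r t))
    (hinit : ∀ x ∈ Icc (-h₀) h₀, 0 ≤ ψ 0 x) :
    (∀ t ∈ Icc 0 T, ∀ x ∈ Icc (η t) (r t), 0 ≤ ψ t x) ∧
    ((∃ x ∈ Icc (-h₀) h₀, ψ 0 x ≠ 0) →
      ∀ t ∈ Ioc 0 T, ∀ x ∈ Ioo (η t) (r t), 0 < ψ t x) := by
  obtain ⟨M₀, hM₀⟩ := hϱbdd
  set M : ℝ := max M₀ 0 with hMdef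
  have hMnn : 0 ≤ M := le_max_right _ _
  have hϱle : ∀ t x, ϱ t x ≤ M := fun t x =>
    le_trans (le_trans (le_abs_self _) (hM₀ t x)) (le_max_left _ _)
  have hϱge : ∀ t x, -M ≤ ϱ t x := by
    intro t x
    have h1 := (abs_le.1 (hM₀ t x)).1
    have h2 : M₀ ≤ M := le_max_left _ _
    linarith
  obtain ⟨K, hK⟩ := hJ.lipschitz
  have hJcont : Continuous J := hK.continuous
  have hTnn : (0:ℝ) ≤ T := hT.le
  have hηcont : ContinuousOn η (Icc 0 T) := hηC1.continuousOn
  have hrcont : ContinuousOn r (Icc 0 T) := hrC1.continuousOn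
  -- bounds on η and r
  have hη_le : ∀ t ∈ Icc 0 T, η t ≤ -h₀ := by
    intro t ht
    rcases eq_or_lt_of_le ht.1 with h | h
    · rw [← h, hη0]
    · rw [← hη0]; exact (hηanti (left_mem_Icc.2 hTnn) ht h).le
  have hr_ge : ∀ t ∈ Icc 0 T, h₀ ≤ r t := by
    intro t ht
    rcases eq_or_lt_of_le ht.1 with h | h
    · rw [← h, hr0]
    · rw [← hr0]; exact (hrmono (left_mem_Icc.2 hTnn) ht h).le
  have hη_lt : ∀ t ∈ Ioc 0 T, η t < -h₀ := by
    intro t ht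
    rw [← hη0]; exact hηanti (left_mem_Icc.2 hTnn) ⟨ht.1.le, ht.2⟩ ht.1
  have hr_gt : ∀ t ∈ Ioc 0 T, h₀ < r t := by
    intro t ht
    rw [← hr0]; exact hrmono (left_mem_Icc.2 hTnn) ⟨ht.1.le, ht.2⟩ ht.1
  have horder : ∀ t ∈ Icc 0 T, η t ≤ r t := fun t ht =>
    le_trans (hη_le t ht) (le_trans (by linarith) (hr_ge t ht))
  have hηT : ∀ t ∈ Icc 0 T, η T ≤ η t := by
    intro t ht
    rcases eq_or_lt_of_le ht.2 with h | h
    · rw [h]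
    · exact (hηanti ht (right_mem_Icc.2 hTnn) h).le
  have hrT : ∀ t ∈ Icc 0 T, r t ≤ r T := by
    intro t ht
    rcases eq_or_lt_of_le ht.2 with h | h
    · rw [h]
    · exact (hrmono ht (right_mem_Icc.2 hTnn) h).le
  -- the domain
  set D : Set (ℝ × ℝ) := {p : ℝ × ℝ | p.1 ∈ Icc 0 T ∧ p.2 ∈ Icc (η p.1) (r p.1)} with hDdef
  -- continuity of sections
  have hψx : ∀ t₁ ∈ Icc 0 T, ContinuousOn (fun x => ψ t₁ x) (Icc (η t₁) (r t₁)) := by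
    intro t₁ ht₁
    exact hψcont.comp ((Continuous.prodMk_right t₁).continuousOn) (fun x hx => ⟨ht₁, hx⟩)
  -- compactness of D
  have hDcp : IsCompact D := by
    set c : ℝ → ℝ := fun t => max 0 (min t T) with hcdef
    have hcc : Continuous c := continuous_const.max (continuous_id.min continuous_const)
    have hcmem : ∀ t, c t ∈ Icc 0 T := fun t => ⟨le_max_left _ _, max_le hTnn (min_le_right _ _)⟩
    have hceq : ∀ t ∈ Icc 0 T, c t = t := fun t ht => by
      simp only [hcdef]; rw [min_eq_left ht.2, max_eq_right ht.1]
    have hηc : Continuous (fun t => η (c t)) := hηcont.comp_continuous hcc hcmem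
    have hrc : Continuous (fun t => r (c t)) := hrcont.comp_continuous hcc hcmem
    have hDeq : D = (Prod.fst ⁻¹' Icc 0 T) ∩
        ({p : ℝ × ℝ | η (c p.1) ≤ p.2} ∩ {p : ℝ × ℝ | p.2 ≤ r (c p.1)}) := by
      ext p
      simp only [hDdef, mem_setOf_eq, mem_inter_iff, mem_preimage, mem_Icc]
      constructor
      · rintro ⟨h1, h2, h3⟩
        exact ⟨h1, by rw [hceq p.1 h1]; exact h2, by rw [hceq p.1 h1]; exact h3⟩
      · rintro ⟨h1, h2, h3⟩
        exact ⟨h1, by rw [hceq p.1 h1] at h2; exact h2, by rw [hceq p.1 h1] at h3; exact h3⟩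
    have hDclosed : IsClosed D := by
      rw [hDeq]
      exact (isClosed_Icc.preimage continuous_fst).inter
        ((isClosed_le (hηc.comp continuous_fst) continuous_snd).inter
          (isClosed_le continuous_snd (hrc.comp continuous_fst)))
    have hDsub : D ⊆ Icc 0 T ×ˢ Icc (η T) (r T) := by
      rintro ⟨t, x⟩ ⟨h1, h2⟩
      exact ⟨h1, le_trans (hηT t h1) h2.1, le_trans h2.2 (hrT t h1)⟩
    exact IsCompact.of_isClosed_subset (isCompact_Icc.prod isCompact_Icc) hDclosed hDsub
  -- Part 1
  have part1 : ∀ t ∈ Icc 0 T, ∀ x ∈ Icc (η t) (r t), 0 ≤ ψ t x := by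
    by_contra hcon
    push_neg at hcon
    obtain ⟨t₁, ht₁, x₁, hx₁, hneg⟩ := hcon
    set k : ℝ := M + 1 with hkdef
    set φ : ℝ × ℝ → ℝ := fun p => Real.exp (-(k * p.1)) * ψ p.1 p.2 with hφdef
    have hφcont : ContinuousOn φ D :=
      ((Real.continuous_exp.comp (continuous_const.mul continuous_fst).neg).continuousOn).mul hψcont
    have hDne : D.Nonempty := ⟨(t₁, x₁), ⟨ht₁, hx₁⟩⟩
    obtain ⟨⟨t₀, x₀⟩, hp₀D, hp₀min⟩ := hDcp.exists_isMinOn hDne hφcont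
    have hmin : ∀ p ∈ D, Real.exp (-(k * t₀)) * ψ t₀ x₀ ≤ Real.exp (-(k * p.1)) * ψ p.1 p.2 :=
      fun p hp => isMinOn_iff.1 hp₀min p hp
    have ht₀m : t₀ ∈ Icc 0 T := hp₀D.1
    have hx₀m : x₀ ∈ Icc (η t₀) (r t₀) := hp₀D.2
    have hmneg : Real.exp (-(k * t₀)) * ψ t₀ x₀ < 0 :=
      lt_of_le_of_lt (hmin (t₁, x₁) ⟨ht₁, hx₁⟩)
        (mul_neg_of_pos_of_neg (Real.exp_pos _) hneg)
    have hEpos : 0 < Real.exp (-(k * t₀)) := Real.exp_pos _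
    have hψ₀neg : ψ t₀ x₀ < 0 := by
      by_contra h
      push_neg at h
      exact absurd (mul_nonneg hEpos.le h) (not_le.2 hmneg)
    have ht₀pos : 0 < t₀ := by
      rcases eq_or_lt_of_le ht₀m.1 with h | h
      · exfalso
        have : x₀ ∈ Icc (-h₀) h₀ := by
          rw [← hη0, ← hr0, h]; exact hx₀m
        have := hinit x₀ this
        rw [← h] at hψ₀neg
        linarith
      · exact h
    have hx₀l : η t₀ < x₀ := by
      rcases eq_or_lt_of_le hx₀m.1 with h | h
      · exfalso; have := (hbdry t₀ ht₀m).1; rw [h] at this; linarith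
      · exact h
    have hx₀r : x₀ < r t₀ := by
      rcases eq_or_lt_of_le hx₀m.2 with h | h
      · exfalso; have := (hbdry t₀ ht₀m).2; rw [← h] at this; linarith
      · exact h
    set B : ℝ := ψ t₀ x₀ with hBdef
    have hBneg : B < 0 := hψ₀neg
    -- lower bound for ψ at time t₀
    have hlb : ∀ y ∈ Icc (η t₀) (r t₀), B ≤ ψ t₀ y := by
      intro y hy
      exact le_of_mul_le_mul_left (hmin (t₀, y) ⟨ht₀m, hy⟩) hEpos
    have hab : η t₀ ≤ r t₀ := horder t₀ ht₀m
    -- interval integral bound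
    have hcψ : ContinuousOn (fun y => J (x₀ - y) * ψ t₀ y) (Icc (η t₀) (r t₀)) :=
      ((hJcont.comp (continuous_const.sub continuous_id)).continuousOn).mul (hψx t₀ ht₀m)
    have hint1 : IntervalIntegrable (fun y => J (x₀ - y) * ψ t₀ y) volume (η t₀) (r t₀) := by
      apply ContinuousOn.intervalIntegrable
      rwa [uIcc_of_le hab]
    have hint2 : IntervalIntegrable (fun y => B * J (x₀ - y)) volume (η t₀) (r t₀) :=
      (continuous_const.mul (hJcont.comp (continuous_const.sub continuous_id))).intervalIntegrable _ _
    have hJle1 : (∫ y in η t₀..r t₀, J (x₀ - y)) ≤ 1 := by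
      rw [intervalIntegral.integral_of_le hab]
      calc ∫ y in Ioc (η t₀) (r t₀), J (x₀ - y) ≤ ∫ y, J (x₀ - y) :=
            setIntegral_le_integral (hJ.integrable.comp_sub_left x₀)
              (Eventually.of_forall (fun y => hJ.nonneg _))
        _ = ∫ y, J y := integral_sub_left_eq_self J volume x₀
        _ = 1 := hJ.integral_one
    have hImono : (∫ y in η t₀..r t₀, B * J (x₀ - y)) ≤
        ∫ y in η t₀..r t₀, J (x₀ - y) * ψ t₀ y := by
      apply intervalIntegral.integral_mono_on hab hint2 hint1
      intro y hy
      rw [mul_comm]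
      exact mul_le_mul_of_nonneg_left (hlb y hy) (hJ.nonneg _)
    have hIlb : B ≤ ∫ y in η t₀..r t₀, J (x₀ - y) * ψ t₀ y := by
      have h1 : (∫ y in η t₀..r t₀, B * J (x₀ - y)) = B * ∫ y in η t₀..r t₀, J (x₀ - y) :=
        intervalIntegral.integral_const_mul B _
      have h2 : B * 1 ≤ B * ∫ y in η t₀..r t₀, J (x₀ - y) :=
        mul_le_mul_of_nonpos_left hJle1 hBneg.le
      rw [h1] at hImono
      linarith
    -- derivative bound
    obtain ⟨δ, hδpos, hwin⟩ := exists_left_window hηcont hrcont ⟨ht₀pos, ht₀m.2⟩ hx₀l hx₀r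
    have hpde := hψ_pde t₀ ⟨ht₀pos, ht₀m.2⟩ x₀ ⟨hx₀l, hx₀r⟩
    have h1 : HasDerivAt (fun t : ℝ => -(k * t)) (-k) t₀ := by
      simpa using ((hasDerivAt_id t₀).const_mul (-k))
    have hexp := h1.exp
    have hfder : HasDerivAt (fun t => Real.exp (-(k * t)) * ψ t x₀)
        (Real.exp (-(k * t₀)) * -k * ψ t₀ x₀ +
          Real.exp (-(k * t₀)) * deriv (fun s => ψ s x₀) t₀) t₀ :=
      hexp.mul hpde.1.hasDerivAt
    have hfmin : ∀ t ∈ Ico (t₀ - δ) t₀,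
        Real.exp (-(k * t₀)) * ψ t₀ x₀ ≤ Real.exp (-(k * t)) * ψ t x₀ := by
      intro t ht
      obtain ⟨htm, hl, hr'⟩ := hwin t ht
      exact hmin (t, x₀) ⟨htm, hl.le, hr'.le⟩
    have hderiv_le : deriv (fun t => Real.exp (-(k * t)) * ψ t x₀) t₀ ≤ 0 :=
      deriv_nonpos_of_left_min hδpos hfder.differentiableAt hfmin
    rw [hfder.deriv] at hderiv_le
    have hdu : deriv (fun s => ψ s x₀) t₀ ≤ k * B := by
      nlinarith [hderiv_le, hEpos]
    have hϱB : M * B ≤ ϱ t₀ x₀ * B :=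
      mul_le_mul_of_nonpos_right (hϱle t₀ x₀) hBneg.le
    have hpde2 := hpde.2
    rw [← hBdef] at hpde2
    have hexp1 : d * ((∫ y in η t₀..r t₀, J (x₀ - y) * ψ t₀ y) - B) ≥ 0 :=
      mul_nonneg hd.le (by linarith)
    have hfinal : k * B ≥ M * B := by linarith
    have : (M + 1) * B = M * B + B := by ring
    rw [hkdef] at hfinal
    linarith
  refine ⟨part1, ?_⟩
  intro hne t₀ ht₀ x₀ hx₀
  have ht₀m : t₀ ∈ Icc 0 T := ⟨ht₀.1.le, ht₀.2⟩
  -- J is positive near 0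
  have hJev : ∀ᶠ u in 𝓝 (0:ℝ), 0 < J u :=
    hJcont.continuousAt.preimage_mem_nhds (Ioi_mem_nhds hJ.pos_at_zero)
  obtain ⟨δJ, hδJ, hJpos⟩ := Metric.eventually_nhds_iff.1 hJev
  -- find an interior point with positive initial value
  have hc0 : ContinuousOn (fun x => ψ 0 x) (Icc (-h₀) h₀) := by
    have := hψx 0 (left_mem_Icc.2 hTnn); rwa [hη0, hr0] at this
  obtain ⟨x₁, hx₁, hne1⟩ := hne
  have hpos1 : 0 < ψ 0 x₁ := lt_of_le_of_ne (hinit _ hx₁) (Ne.symm hne1)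
  obtain ⟨x₂, hx₂m, hx₂pos⟩ : ∃ x₂ ∈ Ioo (-h₀) h₀, 0 < ψ 0 x₂ := by
    rcases eq_or_lt_of_le hx₁.1 with h1 | h1
    · -- x₁ = -h₀
      obtain ⟨δ, hδ, hδp⟩ := Metric.continuousWithinAt_iff.1 (hc0 x₁ hx₁) (ψ 0 x₁) hpos1
      refine ⟨-h₀ + min (δ/2) (h₀/2), ⟨by simp [lt_min_iff]; constructor <;> linarith,
        by have := min_le_right (δ/2) (h₀/2); linarith⟩, ?_⟩
      have hmem : -h₀ + min (δ/2) (h₀/2) ∈ Icc (-h₀) h₀ := by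
        constructor
        · have : (0:ℝ) < min (δ/2) (h₀/2) := lt_min (by linarith) (by linarith)
          linarith
        · have := min_le_right (δ/2) (h₀/2); linarith
      have hdist : dist (-h₀ + min (δ/2) (h₀/2)) x₁ < δ := by
        rw [← h1, Real.dist_eq]
        have h2 : (0:ℝ) < min (δ/2) (h₀/2) := lt_min (by linarith) (by linarith)
        have h3 := min_le_left (δ/2) (h₀/2)
        rw [abs_of_nonneg (by linarith)]; linarith
      have := hδp hmem hdist
      rw [Real.dist_eq, abs_lt] at this
      linarith [this.1]
    rcases eq_or_lt_of_le hx₁.2 with h2 | h2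
    · -- x₁ = h₀
      obtain ⟨δ, hδ, hδp⟩ := Metric.continuousWithinAt_iff.1 (hc0 x₁ hx₁) (ψ 0 x₁) hpos1
      refine ⟨h₀ - min (δ/2) (h₀/2), ⟨by
          have := min_le_right (δ/2) (h₀/2); linarith,
        by have : (0:ℝ) < min (δ/2) (h₀/2) := lt_min (by linarith) (by linarith); linarith⟩, ?_⟩
      have hmem : h₀ - min (δ/2) (h₀/2) ∈ Icc (-h₀) h₀ := by
        constructor
        · have := min_le_right (δ/2) (h₀/2); linarith
        · have : (0:ℝ) < min (δ/2) (h₀/2) := lt_min (by linarith) (by linarith); linarith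
      have hdist : dist (h₀ - min (δ/2) (h₀/2)) x₁ < δ := by
        rw [h2, Real.dist_eq]
        have h3 : (0:ℝ) < min (δ/2) (h₀/2) := lt_min (by linarith) (by linarith)
        have h4 := min_le_left (δ/2) (h₀/2)
        rw [abs_of_nonpos (by linarith)]; linarith
      have := hδp hmem hdist
      rw [Real.dist_eq, abs_lt] at this
      linarith [this.1]
    · exact ⟨x₁, ⟨h1, h2⟩, hpos1⟩
  -- positivity along the line x = x₂
  have hx₂Icc : ∀ t ∈ Icc 0 T, x₂ ∈ Icc (η t) (r t) := fun t ht =>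
    ⟨le_trans (hη_le t ht) hx₂m.1.le, le_trans hx₂m.2.le (hr_ge t ht)⟩
  have hcψt : ContinuousOn (fun t => ψ t x₂) (Icc 0 T) :=
    hψcont.comp ((Continuous.prodMk continuous_id continuous_const).continuousOn)
      (fun t ht => ⟨ht, hx₂Icc t ht⟩)
  set g : ℝ → ℝ := fun t => Real.exp ((d + M) * t) * ψ t x₂ with hgdef
  have hgc : ContinuousOn g (Icc 0 T) :=
    ((Real.continuous_exp.comp (continuous_const.mul continuous_id)).continuousOn).mul hcψt
  have key : ∀ t ∈ Ioo 0 T, DifferentiableAt ℝ g t ∧ 0 ≤ deriv g t := by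
    intro t ht
    have htIoc : t ∈ Ioc 0 T := ⟨ht.1, ht.2.le⟩
    have htm : t ∈ Icc 0 T := ⟨ht.1.le, ht.2.le⟩
    have hx₂in : x₂ ∈ Ioo (η t) (r t) :=
      ⟨lt_of_lt_of_le (hη_lt t htIoc) hx₂m.1.le, lt_of_le_of_lt hx₂m.2.le (hr_gt t htIoc)⟩
    have hpde := hψ_pde t htIoc x₂ hx₂in
    have h1 : HasDerivAt (fun s : ℝ => (d + M) * s) (d + M) t := by
      simpa using ((hasDerivAt_id t).const_mul (d + M))
    have hexp := h1.exp
    have hgder : HasDerivAt g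
        (Real.exp ((d + M) * t) * (d + M) * ψ t x₂ +
          Real.exp ((d + M) * t) * deriv (fun s => ψ s x₂) t) t :=
      hexp.mul hpde.1.hasDerivAt
    refine ⟨hgder.differentiableAt, ?_⟩
    rw [hgder.deriv]
    have hψnn : 0 ≤ ψ t x₂ := part1 t htm x₂ (hx₂Icc t htm)
    have hInn : 0 ≤ ∫ y in η t..r t, J (x₂ - y) * ψ t y := by
      apply intervalIntegral.integral_nonneg (horder t htm)
      intro y hy
      exact mul_nonneg (hJ.nonneg _) (part1 t htm y hy)
    have hϱψ : -M * ψ t x₂ ≤ ϱ t x₂ * ψ t x₂ :=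
      mul_le_mul_of_nonneg_right (hϱge t x₂) hψnn
    have hdu : -(d + M) * ψ t x₂ ≤ deriv (fun s => ψ s x₂) t := by
      have := hpde.2
      nlinarith [mul_nonneg hd.le hInn]
    have hE : 0 < Real.exp ((d + M) * t) := Real.exp_pos _
    nlinarith
  have hmono : MonotoneOn g (Icc 0 T) := by
    apply monotoneOn_of_deriv_nonneg (convex_Icc 0 T) hgc
    · intro t ht
      rw [interior_Icc] at ht
      exact (key t ht).1.differentiableWithinAt
    · intro t ht
      rw [interior_Icc] at ht
      exact (key t ht).2
  have hψx₂pos : ∀ t ∈ Icc 0 T, 0 < ψ t x₂ := by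
    intro t ht
    have h1 : g 0 ≤ g t := hmono (left_mem_Icc.2 hTnn) ht ht.1
    have h2 : g 0 = ψ 0 x₂ := by simp [hgdef]
    have hE : 0 < Real.exp ((d + M) * t) := Real.exp_pos _
    by_contra h
    push_neg at h
    have : g t ≤ 0 := mul_nonpos_of_nonneg_of_nonpos hE.le h
    linarith
  -- zero propagation
  have hψnn₀ : ∀ y ∈ Icc (η t₀) (r t₀), 0 ≤ ψ t₀ y := part1 t₀ ht₀m
  have hcψ₀ : ContinuousOn (fun y => J (x₀ - y) * ψ t₀ y) (Icc (η t₀) (r t₀)) :=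
    ((hJcont.comp (continuous_const.sub continuous_id)).continuousOn).mul (hψx t₀ ht₀m)
  have hzero : ∀ x ∈ Ioo (η t₀) (r t₀), ψ t₀ x = 0 →
      ∀ y ∈ Ioo (η t₀) (r t₀), |y - x| < δJ → ψ t₀ y = 0 := by
    intro x hx hx0 y hy hyx
    obtain ⟨δ, hδpos, hwin⟩ := exists_left_window hηcont hrcont ht₀ hx.1 hx.2
    have hpde := hψ_pde t₀ ht₀ x hx
    have hfmin : ∀ t ∈ Ico (t₀ - δ) t₀, ψ t₀ x ≤ ψ t x := by
      intro t ht
      obtain ⟨htm, h1, h2⟩ := hwin t ht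
      rw [hx0]
      exact part1 t htm x ⟨h1.le, h2.le⟩
    have hder := deriv_nonpos_of_left_min hδpos hpde.1 hfmin
    have hpde2 := hpde.2
    rw [hx0] at hpde2
    have hI0 : (∫ z in η t₀..r t₀, J (x - z) * ψ t₀ z) ≤ 0 := by nlinarith
    by_contra hne2
    have hypos : 0 < ψ t₀ y := lt_of_le_of_ne (hψnn₀ y (Ioo_subset_Icc_self hy)) (Ne.symm hne2)
    have hJxy : 0 < J (x - y) := by
      apply hJpos
      rw [Real.dist_eq, sub_zero, abs_sub_comm]
      exact hyx
    have hIpos : 0 < ∫ z in η t₀..r t₀, J (x - z) * ψ t₀ z := by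
      apply integral_pos_of_pos_at
        (((hJcont.comp (continuous_const.sub continuous_id)).continuousOn).mul (hψx t₀ ht₀m))
        (fun z hz => mul_nonneg (hJ.nonneg _) (hψnn₀ z hz)) hy
      exact mul_pos hJxy hypos
    linarith
  -- connectedness argument
  by_contra hcon
  have hψ00 : ψ t₀ x₀ = 0 := le_antisymm (not_lt.1 hcon) (hψnn₀ x₀ (Ioo_subset_Icc_self hx₀))
  set U : Set ℝ := {x | x ∈ Ioo (η t₀) (r t₀) ∧ ψ t₀ x = 0} with hUdef
  set V : Set ℝ := {x | x ∈ Ioo (η t₀) (r t₀) ∧ 0 < ψ t₀ x} with hVdef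
  have hUopen : IsOpen U := by
    rw [isOpen_iff_mem_nhds]
    rintro x ⟨hxm, hx0⟩
    filter_upwards [Ioo_mem_nhds hxm.1 hxm.2, Metric.ball_mem_nhds x hδJ] with y hy1 hy2
    exact ⟨hy1, hzero x hxm hx0 y hy1 (by rwa [Metric.mem_ball, Real.dist_eq] at hy2)⟩
  have hVopen : IsOpen V := by
    rw [isOpen_iff_mem_nhds]
    rintro x ⟨hxm, hxpos⟩
    have hca : ContinuousAt (fun z => ψ t₀ z) x :=
      (hψx t₀ ht₀m).continuousAt (Icc_mem_nhds hxm.1 hxm.2)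
    filter_upwards [Ioo_mem_nhds hxm.1 hxm.2, hca.preimage_mem_nhds (Ioi_mem_nhds hxpos)]
      with y h1 h2
    exact ⟨h1, h2⟩
  have hcover : Ioo (η t₀) (r t₀) ⊆ U ∪ V := by
    intro x hx
    rcases eq_or_lt_of_le (hψnn₀ x (Ioo_subset_Icc_self hx)) with h | h
    · exact Or.inl ⟨hx, h.symm⟩
    · exact Or.inr ⟨hx, h⟩
  have hx₂in₀ : x₂ ∈ Ioo (η t₀) (r t₀) :=
    ⟨lt_of_lt_of_le (hη_lt t₀ ht₀) hx₂m.1.le, lt_of_le_of_lt hx₂m.2.le (hr_gt t₀ ht₀)⟩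
  obtain ⟨z, hz1, hz2, hz3⟩ := isPreconnected_Ioo U V hUopen hVopen hcover
    ⟨x₀, hx₀, hx₀, hψ00⟩ ⟨x₂, hx₂in₀, hx₂in₀, hψx₂pos t₀ ht₀m⟩
  exact absurd hz3.2 (by rw [hz2.2]; exact lt_irrefl 0)
end

section
/- (Maximum principle on a fixed domain.) Let J satisfy condition (J1), let d > 0, T > 0, h₀ > 0, and set Ω₀ = (0,T] × [-h₀, h₀]. Suppose u is continuous on [0,T] × [-h₀, h₀], continuously differentiable in t, and for some bounded measurable function ϱ on Ω₀ it satisfies u_t(t,x) ≥ d ∫_{-h₀}^{h₀} J(x-y) u(t,y) dy - d u(t,x) + ϱ(t,x) u(t,x) for (t,x) ∈ Ω₀, and u(0,x) ≥ 0 for |x| ≤ h₀. Then u ≥ 0 on [0,T] × [-h₀, h₀]. Moreover, if u(0,·) is not identically 0 on [-h₀, h₀], then u > 0 in Ω₀. -/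
open MeasureTheory Filter Set Topology Real

/-!
For `K > sup ϱ`, the function `e^{-K t} u(t, x)` attains its minimum on the compact rectangle.
At a negative minimum `(t₀, x₀)` we have `t₀ > 0`, so the time derivative there is `≤ 0`; but
`∫ J ≤ 1` makes the nonlocal term nonnegative at a negative minimum of the slice `u(t₀, ·)`, and
the inequality then forces the derivative to be `> 0`. Hence `u ≥ 0`.

Once `u ≥ 0`, with `M ≥ |ϱ|` the function `e^{(d + M) t} u(t, x)` is nondecreasing in `t`, so
`u(t, x₁) > 0` wherever `u(0, x₁) > 0`. If `u(t, z) = 0` with `t > 0`, this is a minimum in time,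
so the inequality gives `∫ J(z - y) u(t, y) dy ≤ 0` and `u(t, ·)` vanishes wherever `J(z - ·) > 0`,
in particular near `z`. The zero set of `u(t, ·)` is therefore relatively open and closed in
`[-h₀, h₀]`, hence empty.
-/

theorem IsPreconnected.subset_of_mem_nhdsWithin {X : Type*} [TopologicalSpace X] {s Z : Set X}
    (hs : IsPreconnected s) (hZ : IsClosed Z) (hne : (s ∩ Z).Nonempty)
    (hloc : ∀ z ∈ s ∩ Z, Z ∈ 𝓝[s] z) : s ⊆ Z := by
  have hint : ∀ z ∈ s ∩ Z, z ∈ interior (Z ∪ sᶜ) := fun z hz =>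
    mem_interior_iff_mem_nhds.2 <| (mem_nhdsWithin_iff_eventually.1 (hloc z hz)).mono
      fun y hy => (em (y ∈ s)).elim (fun h => Or.inl (hy h)) Or.inr
  have hcover : s ⊆ interior (Z ∪ sᶜ) ∪ Zᶜ := fun y hy =>
    (em (y ∈ Z)).elim (fun h => Or.inl (hint y ⟨hy, h⟩)) Or.inr
  have hdisj : s ∩ (interior (Z ∪ sᶜ) ∩ Zᶜ) = ∅ := by
    ext y
    simp only [mem_inter_iff, mem_compl_iff, mem_empty_iff_false, iff_false]
    rintro ⟨hys, hyi, hyZ⟩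
    exact (interior_subset hyi).elim hyZ (· hys)
  rcases isPreconnected_iff_subset_of_disjoint.1 hs _ _ isOpen_interior hZ.isOpen_compl hcover
    hdisj with h | h
  · exact fun y hy => (interior_subset (h hy)).resolve_right (· hy)
  · obtain ⟨z, hzs, hzZ⟩ := hne
    exact absurd hzZ (h hzs)

theorem HasDerivAt.nonpos_of_isMinOn_Icc {f : ℝ → ℝ} {f' a t : ℝ} (hf : HasDerivAt f f' t)
    (hat : a < t) (hmin : IsMinOn f (Icc a t) t) : f' ≤ 0 := by
  refine le_of_tendsto hf.tendsto_slope_zero_left ?_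
  filter_upwards [Ioo_mem_nhdsLT (sub_neg.2 hat)] with h hh
  have hle : f t ≤ f (t + h) := isMinOn_iff.1 hmin _ ⟨by linarith [hh.1], by linarith [hh.2]⟩
  exact smul_nonpos_of_nonpos_of_nonneg (inv_nonpos.2 hh.2.le) (sub_nonneg.2 hle)

theorem HasDerivAt.exp_const_mul_mul {f : ℝ → ℝ} {f' t : ℝ} (c : ℝ) (hf : HasDerivAt f f' t) :
    HasDerivAt (fun s => Real.exp (c * s) * f s) (Real.exp (c * t) * (f' + c * f t)) t := by
  have he : HasDerivAt (fun s => Real.exp (c * s)) (Real.exp (c * t) * c) t := by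
    simpa using ((hasDerivAt_id t).const_mul c).exp
  exact (he.mul hf).congr_deriv (by ring)

theorem le_intervalIntegral_kernel_mul {J f : ℝ → ℝ} {a b c x : ℝ} (hab : a ≤ b)
    (hJ : ∀ z, 0 ≤ J z) (hJi : Integrable J) (hJ1 : ∫ z, J z ≤ 1) (hc : c ≤ 0)
    (hf : IntervalIntegrable (fun y => J (x - y) * f y) volume a b)
    (hfc : ∀ y ∈ Icc a b, c ≤ f y) : c ≤ ∫ y in a..b, J (x - y) * f y := by
  have hJx : Integrable (fun y => J (x - y)) := hJi.comp_sub_left x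
  have hmass : ∫ y in a..b, J (x - y) ≤ 1 := calc
    ∫ y in a..b, J (x - y) = ∫ y in Ioc a b, J (x - y) := intervalIntegral.integral_of_le hab
    _ ≤ ∫ y, J (x - y) := setIntegral_le_integral hJx (Eventually.of_forall fun y => hJ _)
    _ = ∫ z, J z := integral_sub_left_eq_self J volume x
    _ ≤ 1 := hJ1
  calc c ≤ (∫ y in a..b, J (x - y)) * c := by simpa using mul_le_mul_of_nonpos_right hmass hc
    _ = ∫ y in a..b, J (x - y) * c := (intervalIntegral.integral_mul_const c _).symm
    _ ≤ ∫ y in a..b, J (x - y) * f y :=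
      intervalIntegral.integral_mono_on hab (hJx.intervalIntegrable.mul_const c) hf
        fun y hy => mul_le_mul_of_nonneg_left (hfc y hy) (hJ _)

def IsNonlocalSupersolution (J : ℝ → ℝ) (d : ℝ) (ϱ u : ℝ → ℝ → ℝ) (T a b : ℝ) : Prop :=
  ∀ t ∈ Ioc 0 T, ∀ x ∈ Icc a b, DifferentiableAt ℝ (fun s => u s x) t ∧
    d * ((∫ y in a..b, J (x - y) * u t y) - u t x) + ϱ t x * u t x ≤ deriv (fun s => u s x) t

namespace IsNonlocalSupersolution

variable {J : ℝ → ℝ} {d M T a b : ℝ} {ϱ u : ℝ → ℝ → ℝ}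

theorem nonneg_of_initial_nonneg (hu : IsNonlocalSupersolution J d ϱ u T a b)
    (hJc : Continuous J) (hJ : ∀ z, 0 ≤ J z) (hJi : Integrable J) (hJ1 : ∫ z, J z ≤ 1)
    (hd : 0 ≤ d) (hϱ : ∀ t x, ϱ t x ≤ M)
    (hcont : ContinuousOn (Function.uncurry u) (Icc 0 T ×ˢ Icc a b))
    (h0 : ∀ x ∈ Icc a b, 0 ≤ u 0 x) : ∀ t ∈ Icc 0 T, ∀ x ∈ Icc a b, 0 ≤ u t x := by
  intro t ht x hx
  set w : ℝ × ℝ → ℝ := fun p => Real.exp (-(M + 1) * p.1) * u p.1 p.2 with hw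
  have hwcont : ContinuousOn w (Icc 0 T ×ˢ Icc a b) :=
    (Continuous.continuousOn (by fun_prop)).mul hcont
  obtain ⟨⟨t₀, x₀⟩, ⟨ht₀, hx₀⟩, hmin⟩ :=
    (isCompact_Icc.prod isCompact_Icc).exists_isMinOn ⟨(t, x), ht, hx⟩ hwcont
  have hwmin : ∀ s ∈ Icc 0 T, ∀ y ∈ Icc a b, w (t₀, x₀) ≤ w (s, y) :=
    fun s hs y hy => isMinOn_iff.1 hmin (s, y) ⟨hs, hy⟩
  suffices hw₀ : 0 ≤ w (t₀, x₀) from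
    nonneg_of_mul_nonneg_right (hw₀.trans (hwmin t ht x hx)) (Real.exp_pos _)
  by_contra! hneg
  have hu₀ : u t₀ x₀ < 0 := neg_of_mul_neg_right hneg (Real.exp_pos _).le
  have ht₀pos : 0 < t₀ := by
    refine ht₀.1.lt_of_ne fun h => ?_
    subst h
    simp only [hw, mul_zero, exp_zero, one_mul] at hneg
    exact (h0 x₀ hx₀).not_gt hneg
  have hslice : ∀ y ∈ Icc a b, u t₀ x₀ ≤ u t₀ y := fun y hy =>
    le_of_mul_le_mul_left (hwmin t₀ ht₀ y hy) (Real.exp_pos _)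
  have hint : u t₀ x₀ ≤ ∫ y in a..b, J (x₀ - y) * u t₀ y :=
    le_intervalIntegral_kernel_mul (hx₀.1.trans hx₀.2) hJ hJi hJ1 hu₀.le
      (((hJc.comp (continuous_sub_left x₀)).continuousOn.mul
        (hcont.uncurry_left t₀ ht₀)).intervalIntegrable_of_Icc (hx₀.1.trans hx₀.2)) hslice
  obtain ⟨hdiff, hpde⟩ := hu t₀ ⟨ht₀pos, ht₀.2⟩ x₀ hx₀
  have hderiv := hdiff.hasDerivAt.exp_const_mul_mul (-(M + 1))
  have hderiv_nonpos := hderiv.nonpos_of_isMinOn_Icc ht₀pos <| isMinOn_iff.2 fun s hs =>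
    hwmin s ⟨hs.1, hs.2.trans ht₀.2⟩ x₀ hx₀
  have hϱu : M * u t₀ x₀ ≤ ϱ t₀ x₀ * u t₀ x₀ := mul_le_mul_of_nonpos_right (hϱ t₀ x₀) hu₀.le
  have hgrowth : 0 < deriv (fun s => u s x₀) t₀ + -(M + 1) * u t₀ x₀ := by
    nlinarith [mul_nonneg hd (sub_nonneg.2 hint)]
  exact (mul_pos (Real.exp_pos _) hgrowth).not_ge hderiv_nonpos

theorem monotoneOn_exp_mul (hu : IsNonlocalSupersolution J d ϱ u T a b) (hJ : ∀ z, 0 ≤ J z)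
    (hd : 0 ≤ d) (hϱ : ∀ t x, -M ≤ ϱ t x)
    (hcont : ContinuousOn (Function.uncurry u) (Icc 0 T ×ˢ Icc a b))
    (hnonneg : ∀ t ∈ Icc 0 T, ∀ x ∈ Icc a b, 0 ≤ u t x) {x : ℝ} (hx : x ∈ Icc a b) :
    MonotoneOn (fun s => Real.exp ((d + M) * s) * u s x) (Icc 0 T) := by
  refine monotoneOn_of_hasDerivWithinAt_nonneg (convex_Icc 0 T)
    (f' := fun s => Real.exp ((d + M) * s) * (deriv (fun σ => u σ x) s + (d + M) * u s x))
    ((Continuous.continuousOn (by fun_prop)).mul (hcont.uncurry_right x hx))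
    (fun s hs => ?_) (fun s hs => ?_)
  all_goals rw [interior_Icc] at hs
  · exact ((hu s ⟨hs.1, hs.2.le⟩ x hx).1.hasDerivAt.exp_const_mul_mul _).hasDerivWithinAt
  · obtain ⟨-, hpde⟩ := hu s ⟨hs.1, hs.2.le⟩ x hx
    have hint : 0 ≤ ∫ y in a..b, J (x - y) * u s y := intervalIntegral.integral_nonneg
      (hx.1.trans hx.2) fun y hy => mul_nonneg (hJ _) (hnonneg s ⟨hs.1.le, hs.2.le⟩ y hy)
    have hϱu : 0 ≤ (ϱ s x + M) * u s x :=
      mul_nonneg (by linarith [hϱ s x]) (hnonneg s ⟨hs.1.le, hs.2.le⟩ x hx)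
    refine mul_nonneg (Real.exp_pos _).le ?_
    nlinarith [mul_nonneg hd hint]

theorem pos_of_initial_pos (hu : IsNonlocalSupersolution J d ϱ u T a b) (hJ : ∀ z, 0 ≤ J z)
    (hd : 0 ≤ d) (hϱ : ∀ t x, -M ≤ ϱ t x)
    (hcont : ContinuousOn (Function.uncurry u) (Icc 0 T ×ˢ Icc a b))
    (hnonneg : ∀ t ∈ Icc 0 T, ∀ x ∈ Icc a b, 0 ≤ u t x) {x t : ℝ} (hx : x ∈ Icc a b)
    (ht : t ∈ Icc 0 T) (hx0 : 0 < u 0 x) : 0 < u t x := by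
  have hmono := hu.monotoneOn_exp_mul hJ hd hϱ hcont hnonneg hx ⟨le_rfl, ht.1.trans ht.2⟩ ht ht.1
  simp only [mul_zero, Real.exp_zero, one_mul] at hmono
  exact pos_of_mul_pos_right (hx0.trans_le hmono) (Real.exp_pos _).le

theorem eq_zero_of_kernel_pos (hu : IsNonlocalSupersolution J d ϱ u T a b) (hJc : Continuous J)
    (hJ : ∀ z, 0 ≤ J z) (hd : 0 < d)
    (hcont : ContinuousOn (Function.uncurry u) (Icc 0 T ×ˢ Icc a b))
    (hnonneg : ∀ t ∈ Icc 0 T, ∀ x ∈ Icc a b, 0 ≤ u t x) {t z y : ℝ} (ht : t ∈ Ioc 0 T)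
    (hz : z ∈ Icc a b) (hz0 : u t z = 0) (hy : y ∈ Icc a b) (hJzy : 0 < J (z - y)) :
    u t y = 0 := by
  have ht' : t ∈ Icc 0 T := Ioc_subset_Icc_self ht
  by_contra hy0
  have hypos : 0 < u t y := (hnonneg t ht' y hy).lt_of_ne (Ne.symm hy0)
  have hab : a < b := by
    rcases lt_or_gt_of_ne (show y ≠ z by rintro rfl; exact hy0 hz0) with h | h
    · linarith [hy.1, hz.2]
    · linarith [hz.1, hy.2]
  have hint : 0 < ∫ y in a..b, J (z - y) * u t y :=
    intervalIntegral.integral_pos hab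
      ((hJc.comp (continuous_sub_left z)).continuousOn.mul (hcont.uncurry_left t ht'))
      (fun y hy => mul_nonneg (hJ _) (hnonneg t ht' y (Ioc_subset_Icc_self hy)))
      ⟨y, hy, mul_pos hJzy hypos⟩
  obtain ⟨hdiff, hpde⟩ := hu t ht z hz
  have hderiv_nonpos := hdiff.hasDerivAt.nonpos_of_isMinOn_Icc ht.1 <| isMinOn_iff.2 fun s hs =>
    hz0 ▸ hnonneg s ⟨hs.1, hs.2.trans ht.2⟩ z hz
  rw [hz0, sub_zero, mul_zero, add_zero] at hpde
  nlinarith [mul_pos hd hint]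

theorem eqOn_zero_of_eq_zero (hu : IsNonlocalSupersolution J d ϱ u T a b) (hJc : Continuous J)
    (hJ : ∀ z, 0 ≤ J z) (hJ0 : 0 < J 0) (hd : 0 < d)
    (hcont : ContinuousOn (Function.uncurry u) (Icc 0 T ×ˢ Icc a b))
    (hnonneg : ∀ t ∈ Icc 0 T, ∀ x ∈ Icc a b, 0 ≤ u t x) {t z : ℝ} (ht : t ∈ Ioc 0 T)
    (hz : z ∈ Icc a b) (hz0 : u t z = 0) : EqOn (u t) 0 (Icc a b) := by
  set Z := Icc a b ∩ u t ⁻¹' {0}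
  have hZ : IsClosed Z :=
    (hcont.uncurry_left t (Ioc_subset_Icc_self ht)).preimage_isClosed_of_isClosed isClosed_Icc
      isClosed_singleton
  suffices Icc a b ⊆ Z from fun y hy => (this hy).2
  refine isPreconnected_Icc.subset_of_mem_nhdsWithin hZ ⟨z, hz, hz, hz0⟩ fun w hw => ?_
  have hJw : ∀ᶠ y in 𝓝 w, 0 < J (w - y) := by
    have := (hJc.comp (continuous_sub_left w)).tendsto w
    simp only [Function.comp_apply, sub_self] at this
    exact this.eventually_const_lt hJ0
  exact mem_nhdsWithin_iff_eventually.2 <| hJw.mono fun y hJy hy =>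
    ⟨hy, hu.eq_zero_of_kernel_pos hJc hJ hd hcont hnonneg ht hw.1 hw.2.2 hy hJy⟩

end IsNonlocalSupersolution

theorem maximum_principle_fixed_domain_general
    (J : ℝ → ℝ) (hJ : KernelCond J) (d T h₀ : ℝ)
    (hd : 0 < d)
    (u : ℝ → ℝ → ℝ)
    (hucont : ContinuousOn (fun p : ℝ × ℝ => u p.1 p.2) (Icc 0 T ×ˢ Icc (-h₀) h₀))
    (ϱ : ℝ → ℝ → ℝ)
    (hϱbdd : ∃ M, ∀ t x, |ϱ t x| ≤ M)
    (hu_pde : ∀ t ∈ Ioc 0 T, ∀ x ∈ Icc (-h₀) h₀,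
      DifferentiableAt ℝ (fun s => u s x) t ∧
      d * ((∫ y in (-h₀)..h₀, J (x - y) * u t y) - u t x) + ϱ t x * u t x ≤
        deriv (fun s => u s x) t)
    (hinit : ∀ x ∈ Icc (-h₀) h₀, 0 ≤ u 0 x) :
    (∀ t ∈ Icc 0 T, ∀ x ∈ Icc (-h₀) h₀, 0 ≤ u t x) ∧
    ((∃ x ∈ Icc (-h₀) h₀, u 0 x ≠ 0) →
      ∀ t ∈ Ioc 0 T, ∀ x ∈ Icc (-h₀) h₀, 0 < u t x) := by
  obtain ⟨M, hM⟩ := hϱbdd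
  have hJc : Continuous J := hJ.lipschitz.elim fun _ hK => hK.continuous
  have hsup : IsNonlocalSupersolution J d ϱ u T (-h₀) h₀ := hu_pde
  have hnonneg := hsup.nonneg_of_initial_nonneg hJc hJ.nonneg hJ.integrable
    hJ.integral_one.le hd.le (fun t x => (abs_le.1 (hM t x)).2) hucont hinit
  refine ⟨hnonneg, ?_⟩
  rintro ⟨x₁, hx₁, hu₁⟩ t ht x hx
  have hpos₁ : 0 < u t x₁ :=
    hsup.pos_of_initial_pos hJ.nonneg hd.le (fun t x => (abs_le.1 (hM t x)).1) hucont hnonneg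
      hx₁ (Ioc_subset_Icc_self ht) ((hinit x₁ hx₁).lt_of_ne hu₁.symm)
  by_contra! hux
  have hzero := hsup.eqOn_zero_of_eq_zero hJc hJ.nonneg hJ.pos_at_zero hd hucont hnonneg ht hx
    (hux.antisymm (hnonneg t (Ioc_subset_Icc_self ht) x hx))
  exact hpos₁.ne' (hzero hx₁)

/-- Lemma 2.2 (maximum principle on a fixed domain). -/
theorem maximum_principle_fixed_domain
    (J : ℝ → ℝ) (hJ : KernelCond J) (d T h₀ : ℝ)
    (hd : 0 < d) (hT : 0 < T) (hh₀ : 0 < h₀)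
    (u : ℝ → ℝ → ℝ)
    (hucont : ContinuousOn (fun p : ℝ × ℝ => u p.1 p.2) (Icc 0 T ×ˢ Icc (-h₀) h₀))
    (ϱ : ℝ → ℝ → ℝ) (hϱmeas : Measurable (Function.uncurry ϱ))
    (hϱbdd : ∃ M, ∀ t x, |ϱ t x| ≤ M)
    (hu_pde : ∀ t ∈ Ioc 0 T, ∀ x ∈ Icc (-h₀) h₀,
      DifferentiableAt ℝ (fun s => u s x) t ∧
      d * ((∫ y in (-h₀)..h₀, J (x - y) * u t y) - u t x) + ϱ t x * u t x ≤
        deriv (fun s => u s x) t)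
    (hinit : ∀ x ∈ Icc (-h₀) h₀, 0 ≤ u 0 x) :
    (∀ t ∈ Icc 0 T, ∀ x ∈ Icc (-h₀) h₀, 0 ≤ u t x) ∧
    ((∃ x ∈ Icc (-h₀) h₀, u 0 x ≠ 0) →
      ∀ t ∈ Ioc 0 T, ∀ x ∈ Icc (-h₀) h₀, 0 < u t x) :=
  maximum_principle_fixed_domain_general J hJ d T h₀ hd u hucont ϱ hϱbdd hu_pde hinit
end
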